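/- arXiv:2306.17662 — 7 statements merged into one kernel-verified Lean document; each statement's English description precedes it below -/
import Mathlib

section
/- For simple symmetric random walk on ℤ started at 1, the probability that the first hitting time of 0 equals 2n+1 is 2^{-1-2n}/(n+1) times the central binomial coefficient C(2n,n). -/
/-!
Almost surely every step is `±1`, and by independence each of the `2^(2n+1)` sign patterns of
the first `2n+1` steps has probability `2^-(2n+1)`. Since the walk moves down by at most one, it
stays at height `≥ 1` before hitting `0`; so a sign pattern hits `0` first at time `2n+1` exactly
when it is a Dyck word of semilength `n` followed by a down-step. There are
`catalan n = C(2n,n)/(n+1)` of these.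
-/

open List DyckStep

namespace DyckStep

def toInt : DyckStep → ℤ
  | U => 1
  | D => -1

@[simp] lemma toInt_U : U.toInt = 1 := rfl
@[simp] lemma toInt_D : D.toInt = -1 := rfl

lemma toInt_eq_one_or_eq_neg_one (s : DyckStep) : s.toInt = 1 ∨ s.toInt = -1 := by
  cases s <;> simp

lemma toInt_injective : Function.Injective toInt := by
  intro s t; cases s <;> cases t <;> simp

lemma sum_map_toInt (l : List DyckStep) : (l.map toInt).sum = l.count U - l.count D := by
  induction l with
  | nil => simp
  | cons s l ih => cases s <;> simp [ih] <;> ring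

end DyckStep

def IsFirstPassage (l : List ℤ) : Prop :=
  1 + l.sum = 0 ∧ ∀ k < l.length, 1 + (l.take k).sum ≠ 0

-- With no down-step larger than one, the walk cannot get below `1` without visiting `0`.
lemma IsFirstPassage.sum_take_nonneg {l : List ℤ} (hl : IsFirstPassage l)
    (hstep : ∀ x ∈ l, -1 ≤ x) {k : ℕ} (hk : k < l.length) : 0 ≤ (l.take k).sum := by
  induction k with
  | zero => simp
  | succ k ih =>
    have hne := hl.2 (k + 1) hk
    have hstep_k := hstep _ (getElem_mem (by omega : k < l.length))
    have hk_nonneg := ih (by omega)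
    rw [sum_take_succ _ _ (by omega)] at hne ⊢
    omega

lemma isFirstPassage_map_toInt_iff (l : List DyckStep) :
    IsFirstPassage (l.map toInt) ↔ ∃ p : DyckWord, l = p.toList ++ [D] := by
  constructor
  · intro hl
    have hstep : ∀ x ∈ l.map toInt, -1 ≤ x := by
      simp only [mem_map]
      rintro _ ⟨s, -, rfl⟩
      rcases s.toInt_eq_one_or_eq_neg_one with h | h <;> simp [h]
    have hnonneg : ∀ k < l.length, (l.take k).count D ≤ (l.take k).count U := by
      intro k hk
      have := hl.sum_take_nonneg hstep (by simpa using hk)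
      rw [← map_take, sum_map_toInt] at this
      omega
    obtain rfl | ⟨l, s, rfl⟩ := l.eq_nil_or_concat
    · simpa [IsFirstPassage] using hl.1
    rw [concat_eq_append] at hl hnonneg ⊢
    have hprefix := hnonneg l.length (by simp)
    have hsum := hl.1
    simp only [take_left', map_append, sum_append, sum_map_toInt] at hprefix hsum
    refine ⟨⟨l, ?_, fun i => ?_⟩, ?_⟩
    · cases s <;> simp at hsum <;> omega
    · rcases lt_or_ge i l.length with hi | hi
      · simpa [take_append_of_le_length hi.le] using hnonneg i (by simp; omega)
      · rw [take_of_length_le hi]; exact hprefix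
    · cases s <;> simp at hsum ⊢; omega
  · rintro ⟨p, rfl⟩
    refine ⟨by simp [sum_map_toInt, p.count_U_eq_count_D], fun k hk => ?_⟩
    simp only [length_map, length_append, length_singleton] at hk
    rw [← map_take, take_append_of_le_length (by omega), sum_map_toInt]
    have := p.count_D_le_count_U k
    omega

instance : DecidablePred IsFirstPassage := fun l => by unfold IsFirstPassage; infer_instance

def signVectors (ι : Type*) [Fintype ι] [DecidableEq ι] : Finset (ι → ℤ) :=
  Fintype.piFinset fun _ => {1, -1}

lemma exists_map_toInt_eq {l : List ℤ} (hl : ∀ x ∈ l, x = 1 ∨ x = -1) :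
    ∃ l' : List DyckStep, l'.map toInt = l := by
  induction l with
  | nil => exact ⟨[], rfl⟩
  | cons x l ih =>
    obtain ⟨l', hl'⟩ := ih fun y hy => hl y (mem_cons_of_mem x hy)
    rcases hl x mem_cons_self with rfl | rfl
    · exact ⟨U :: l', by simp [hl']⟩
    · exact ⟨D :: l', by simp [hl']⟩

lemma ofFn_getElem_of_length_eq {α : Type*} {m : ℕ} (l : List α) (h : l.length = m) :
    ofFn (fun i : Fin m => l[i.1]) = l := by
  subst h; exact ofFn_getElem

open Finset in
lemma card_filter_isFirstPassage (n : ℕ) :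
    #{w ∈ signVectors (Fin (2 * n + 1)) | IsFirstPassage (ofFn w)} = catalan n := by
  have hlen (p : {p : DyckWord // p.semilength = n}) :
      ((p.1.toList ++ [D]).map toInt).length = 2 * n + 1 := by
    simp [← p.1.two_mul_semilength_eq_length, p.2]
  rw [← DyckWord.card_dyckWord_semilength_eq_catalan, ← card_univ]
  symm
  refine card_bij (fun p _ i => ((p.1.toList ++ [D]).map toInt)[i.1]'(by rw [hlen]; exact i.2))
    (fun p _ => ?_) (fun p _ q _ hpq => ?_) (fun w hw => ?_)
  · rw [Finset.mem_filter, signVectors, Fintype.mem_piFinset, ofFn_getElem_of_length_eq _ (hlen p)]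
    refine ⟨fun i => ?_, (isFirstPassage_map_toInt_iff _).2 ⟨p.1, rfl⟩⟩
    obtain ⟨s, -, hs⟩ := mem_map.1 (getElem_mem (l := (p.1.toList ++ [D]).map toInt) _)
    rw [← hs]
    simpa using s.toInt_eq_one_or_eq_neg_one
  · have := congrArg ofFn hpq
    rw [ofFn_getElem_of_length_eq _ (hlen p), ofFn_getElem_of_length_eq _ (hlen q),
      map_inj_right toInt_injective, append_left_inj] at this
    exact Subtype.ext (DyckWord.ext this)
  · rw [Finset.mem_filter, signVectors, Fintype.mem_piFinset] at hw
    obtain ⟨l, hl⟩ := exists_map_toInt_eq (l := ofFn w)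
      (forall_mem_ofFn_iff.2 fun i => by simpa using hw.1 i)
    obtain ⟨p, rfl⟩ := (isFirstPassage_map_toInt_iff l).1 (hl ▸ hw.2)
    have hp : p.semilength = n := by
      have := congrArg length hl
      simp only [length_map, length_append, length_ofFn, length_singleton,
        ← p.two_mul_semilength_eq_length] at this
      omega
    refine ⟨⟨p, hp⟩, mem_univ _, ofFn_injective ?_⟩
    rw [ofFn_getElem_of_length_eq _ (hlen ⟨p, hp⟩), hl]

lemma sum_take_ofFn_eq_sum_range (f : ℕ → ℤ) {k m : ℕ} (hk : k ≤ m) :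
    ((ofFn fun i : Fin m => f i).take k).sum = ∑ i ∈ Finset.range k, f i := by
  rw [← Fin.ofFn_take_eq_take_ofFn hk, sum_ofFn]
  exact Fin.sum_univ_eq_sum_range _ _

section RademacherSteps

open MeasureTheory ProbabilityTheory
open scoped Finset

variable {ι Ω : Type*} [MeasurableSpace Ω] {P : Measure Ω} {X : ι → Ω → ℤ}

lemma ae_forall_eq_one_or_eq_neg_one [Countable ι] [IsProbabilityMeasure P]
    (hmeas : ∀ i, Measurable (X i))
    (hup : ∀ i, P {ω | X i ω = 1} = 1/2) (hdown : ∀ i, P {ω | X i ω = -1} = 1/2) :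
    ∀ᵐ ω ∂P, ∀ i, X i ω = 1 ∨ X i ω = -1 := by
  refine ae_all_iff.2 fun i => ?_
  have hdisj : Disjoint {ω | X i ω = 1} {ω | X i ω = -1} :=
    Set.disjoint_left.2 fun ω h1 h2 => by simp_all
  have hunion : P ({ω | X i ω = 1} ∪ {ω | X i ω = -1}) = 1 := by
    rw [measure_union hdisj (hmeas i (measurableSet_singleton _)), hup, hdown,
      ENNReal.add_halves]
  exact (prob_compl_eq_zero_iff ((hmeas i (measurableSet_singleton _)).union
    (hmeas i (measurableSet_singleton _)))).2 hunion

lemma measure_forall_eq_of_mem_signVectors [Fintype ι] [DecidableEq ι] (hindep : iIndepFun X P)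
    (hup : ∀ i, P {ω | X i ω = 1} = 1/2) (hdown : ∀ i, P {ω | X i ω = -1} = 1/2)
    {w : ι → ℤ} (hw : w ∈ signVectors ι) :
    P {ω | ∀ i, X i ω = w i} = 2⁻¹ ^ Fintype.card ι := by
  have hfactor (i : ι) : P (X i ⁻¹' {w i}) = 2⁻¹ := by
    have := Fintype.mem_piFinset.1 hw i
    simp only [Finset.mem_insert, Finset.mem_singleton] at this
    rcases this with h | h <;> simp [Set.preimage, h, hup, hdown]
  have hiInter : {ω | ∀ i, X i ω = w i} = ⋂ i, X i ⁻¹' {w i} := by ext; simp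
  rw [hiInter, hindep.meas_iInter fun i => ⟨{w i}, measurableSet_singleton _, rfl⟩,
    Finset.prod_congr rfl fun i _ => hfactor i, Finset.prod_const, Finset.card_univ]

lemma measure_setOf_eq_card_filter_signVectors [Fintype ι] [DecidableEq ι]
    [IsProbabilityMeasure P]
    (hmeas : ∀ i, Measurable (X i)) (hindep : iIndepFun X P)
    (hup : ∀ i, P {ω | X i ω = 1} = 1/2) (hdown : ∀ i, P {ω | X i ω = -1} = 1/2)
    (Q : (ι → ℤ) → Prop) [DecidablePred Q] :
    P {ω | Q fun i => X i ω} = #{w ∈ signVectors ι | Q w} * 2⁻¹ ^ Fintype.card ι := by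
  set V : Ω → ι → ℤ := fun ω i => X i ω
  have hV : Measurable V := measurable_pi_lambda _ hmeas
  have hae :
      {ω | Q (V ω)} =ᵐ[P] V ⁻¹' ({w ∈ signVectors ι | Q w} : Finset (ι → ℤ)) := by
    filter_upwards [ae_forall_eq_one_or_eq_neg_one hmeas hup hdown] with ω hω
    change Q (V ω) = (V ω ∈ (_ : Set (ι → ℤ)))
    simp [V, signVectors, hω]
  have hfiber (w : ι → ℤ) : V ⁻¹' {w} = {ω | ∀ i, X i ω = w i} := by
    ext; simp [V, funext_iff]
  rw [measure_congr hae,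
    ← sum_measure_preimage_singleton _ fun w _ => hV (measurableSet_singleton w),
    Finset.sum_congr rfl fun w hw => (hfiber w).symm ▸
      measure_forall_eq_of_mem_signVectors hindep hup hdown (Finset.mem_filter.1 hw).1,
    Finset.sum_const, nsmul_eq_mul]

end RademacherSteps

lemma catalan_eq_choose_div (n : ℕ) : (catalan n : ℝ) = (2 * n).choose n / (n + 1) := by
  rw [eq_div_iff (by positivity), ← Nat.centralBinom_eq_two_mul_choose,
    ← succ_mul_catalan_eq_centralBinom]
  push_cast
  ring

lemma ofReal_two_zpow_div_mul_choose (n : ℕ) :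
    ENNReal.ofReal ((2:ℝ) ^ (-(1:ℤ) - 2 * n) / (n + 1) * (2 * n).choose n)
      = catalan n * 2⁻¹ ^ (2 * n + 1) := by
  have hreal : (2:ℝ) ^ (-(1:ℤ) - 2 * n) / (n + 1) * (2 * n).choose n
      = catalan n * 2⁻¹ ^ (2 * n + 1) := by
    rw [catalan_eq_choose_div,
      show -(1:ℤ) - 2 * n = -((2 * n + 1 : ℕ) : ℤ) by push_cast; ring,
      zpow_neg, zpow_natCast, inv_pow]
    ring
  rw [hreal, ENNReal.ofReal_mul (by positivity), ENNReal.ofReal_natCast,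
    ENNReal.ofReal_pow (by norm_num), ENNReal.ofReal_inv_of_pos two_pos, ENNReal.ofReal_ofNat]

open MeasureTheory ProbabilityTheory

/-- Simple symmetric random walk started at 1: the probability that the first
hitting time of 0 equals `2n+1` is `2^(-1-2n)/(n+1) * C(2n,n)`. -/
theorem stmt_0
    {Ω : Type*} [MeasurableSpace Ω] (P : Measure Ω) [IsProbabilityMeasure P]
    (X : ℕ → Ω → ℤ) (hmeas : ∀ i, Measurable (X i))
    (hindep : iIndepFun X P)
    (hup : ∀ i, P {ω | X i ω = 1} = 1/2)
    (hdown : ∀ i, P {ω | X i ω = -1} = 1/2)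
    (S : ℕ → Ω → ℤ) (hS : ∀ n ω, S n ω = 1 + ∑ i ∈ Finset.range n, X i ω)
    (n : ℕ) :
    P {ω | S (2*n+1) ω = 0 ∧ ∀ k < 2*n+1, S k ω ≠ 0}
      = ENNReal.ofReal ((2:ℝ)^(-(1:ℤ) - 2*n) / (n+1) * (Nat.choose (2*n) n)) := by
  have hS_eq {ω : Ω} {k : ℕ} (hk : k ≤ 2 * n + 1) :
      S k ω = 1 + ((ofFn fun i : Fin (2 * n + 1) => X i ω).take k).sum := by
    rw [hS, sum_take_ofFn_eq_sum_range (fun i => X i ω) hk]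
  have hevent : {ω | S (2*n+1) ω = 0 ∧ ∀ k < 2*n+1, S k ω ≠ 0}
      = {ω | IsFirstPassage (ofFn fun i : Fin (2 * n + 1) => X i ω)} := by
    ext ω
    simp only [Set.mem_ofPred_eq, IsFirstPassage, length_ofFn]
    rw [hS_eq le_rfl, take_of_length_le (by simp)]
    exact and_congr_right' (forall₂_congr fun k hk => by rw [hS_eq hk.le])
  rw [hevent, measure_setOf_eq_card_filter_signVectors (X := fun i : Fin (2 * n + 1) => X i)
    (fun i => hmeas i) (hindep.precomp Fin.val_injective) (fun i => hup i) (fun i => hdown i)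
    fun w => IsFirstPassage (ofFn w),
    card_filter_isFirstPassage, Fintype.card_fin, ofReal_two_zpow_div_mul_choose]
end

section
/- The distribution of the exit time from {0,N} of simple random walk started at 1 is given by the Laplace trigonometric sum: P_1(τ_{0,N} = n) = (2/N) Σ_{k=1}^{⌈(N−1)/2⌉} cos^{n−1}(π(2k−1)/N) sin²(π(2k−1)/N). -/
/-!
Splitting according to the first `n` steps, `P₁(τ = n)` is `2⁻ⁿ` times the number of `±1` step
sequences whose walk from `1` first leaves `(0, N)` at time `n`. In `x`, this count obeys
`c_{m+1}(x) = c_m(x - 1) + c_m(x + 1)` inside the strip and vanishes at `x = 0, N`. The same holds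
for the spectral expression built from the Dirichlet eigenvectors `x ↦ sin (π j x / N)` of the path
graph, whose eigenvalues are `2 cos (π j / N)`, and orthogonality of these sines matches the initial
values. At `x = 1` the two exits, through `1 → 0` and `N - 1 → N`, cancel the even frequencies and
double the odd ones `j = 2k - 1`.
-/

open MeasureTheory ProbabilityTheory Real Finset

namespace RandomWalk

def walk (x : ℤ) (d : ℕ → ℤ) (k : ℕ) : ℤ := x + ∑ i ∈ range k, d i

def ExitsAt (N n : ℕ) (s : ℕ → ℤ) : Prop :=
  (s n = 0 ∨ s n = N) ∧ ∀ k < n, s k ≠ 0 ∧ s k ≠ N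

instance (N n : ℕ) (s : ℕ → ℤ) : Decidable (ExitsAt N n s) := by
  unfold ExitsAt; infer_instance

def boolSign (b : Bool) : ℤ := if b then 1 else -1

theorem boolSign_injective : Function.Injective boolSign := by
  decide

def signs {n : ℕ} (ε : Fin n → Bool) (i : ℕ) : ℤ := if h : i < n then boolSign (ε ⟨i, h⟩) else 0

def exitCount (N n : ℕ) (x : ℤ) : ℕ := #{ε : Fin n → Bool | ExitsAt N n (walk x (signs ε))}

theorem walk_zero (x : ℤ) (d : ℕ → ℤ) : walk x d 0 = x := by simp [walk]

theorem walk_succ' (x : ℤ) (d : ℕ → ℤ) (k : ℕ) :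
    walk x d (k + 1) = walk (x + d 0) (fun i ↦ d (i + 1)) k := by
  simp only [walk, sum_range_succ']
  ring

theorem walk_congr {x : ℤ} {d d' : ℕ → ℤ} {k : ℕ} (h : ∀ i < k, d i = d' i) :
    walk x d k = walk x d' k := by
  simp only [walk]
  congr 1
  exact sum_congr rfl fun i hi ↦ h i (mem_range.1 hi)

theorem exitsAt_zero {N : ℕ} {s : ℕ → ℤ} : ExitsAt N 0 s ↔ s 0 = 0 ∨ s 0 = N := by
  simp [ExitsAt]

theorem exitsAt_succ {N n : ℕ} {s : ℕ → ℤ} :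
    ExitsAt N (n + 1) s ↔ (s 0 ≠ 0 ∧ s 0 ≠ N) ∧ ExitsAt N n (fun k ↦ s (k + 1)) := by
  simp only [ExitsAt, Nat.forall_lt_succ_left]
  tauto

theorem exitsAt_walk_congr {N n : ℕ} {x : ℤ} {d d' : ℕ → ℤ} (h : ∀ i < n, d i = d' i) :
    ExitsAt N n (walk x d) ↔ ExitsAt N n (walk x d') := by
  have hk : ∀ k ≤ n, walk x d k = walk x d' k := fun k hk ↦
    walk_congr fun i hi ↦ h i (by omega)
  simp only [ExitsAt]
  rw [hk n le_rfl]
  exact and_congr_right' (forall₂_congr fun k hk' ↦ by rw [hk k hk'.le])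

theorem signs_cons_zero {n : ℕ} (b : Bool) (ε : Fin n → Bool) :
    signs (Fin.cons b ε : Fin (n + 1) → Bool) 0 = boolSign b := rfl

theorem signs_cons_succ {n : ℕ} (b : Bool) (ε : Fin n → Bool) :
    (fun i ↦ signs (Fin.cons b ε : Fin (n + 1) → Bool) (i + 1)) = signs ε := by
  funext i
  by_cases h : i < n
  · rw [signs, signs, dif_pos (by omega), dif_pos h]
    rfl
  · rw [signs, signs, dif_neg (by omega), dif_neg h]

theorem exitCount_zero (N : ℕ) (x : ℤ) : exitCount N 0 x = if x = 0 ∨ x = N then 1 else 0 := by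
  unfold exitCount
  split_ifs with h <;> simp [exitsAt_zero, walk_zero, h]

theorem exitCount_succ (N n : ℕ) (x : ℤ) :
    exitCount N (n + 1) x =
      if x ≠ 0 ∧ x ≠ N then exitCount N n (x + 1) + exitCount N n (x - 1) else 0 := by
  simp only [exitCount, card_filter]
  rw [← (Fin.consEquiv fun _ ↦ Bool).sum_comp, Fintype.sum_prod_type, Fintype.sum_bool]
  have hcons (p : Bool × (Fin n → Bool)) : Fin.consEquiv (fun _ ↦ Bool) p = Fin.cons p.1 p.2 :=
    rfl
  simp only [hcons, exitsAt_succ, walk_zero, walk_succ', signs_cons_zero, signs_cons_succ]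
  split_ifs with hx
  · simp [hx, boolSign, sub_eq_add_neg]
  · simp [hx]

theorem sum_range_cos_pi_mul {N : ℕ} (hN : N ≠ 0) {m : ℤ} (hm : ¬ (2 * N : ℤ) ∣ m) :
    ∑ j ∈ range N, cos (π * m / N * j) = (1 - cos (π * m)) / 2 := by
  have hNR : (N : ℝ) ≠ 0 := Nat.cast_ne_zero.2 hN
  have hsin : sin (π * m / N / 2) ≠ 0 := by
    rw [Ne, sin_eq_zero_iff]
    rintro ⟨k, hk⟩
    refine hm ⟨k, ?_⟩
    have : (m : ℝ) = 2 * N * k := by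
      field_simp at hk
      nlinarith [pi_pos]
    exact_mod_cast this
  have hprod : sin (π * m / 2) * cos (π * m / 2) = 0 := by
    have := sin_two_mul (π * m / 2)
    rw [show 2 * (π * m / 2) = m * π by ring, sin_int_mul_pi] at this
    linarith
  have hsq : sin (π * m / 2) ^ 2 = (1 - cos (π * m)) / 2 := by
    have := cos_sq_add_sin_sq (π * m / 2)
    have h2 := cos_two_mul (π * m / 2)
    rw [show 2 * (π * m / 2) = π * m by ring] at h2
    linarith
  have key := sin_mul_sum_cos N (π * m / N) 0
  simp only [add_zero] at key
  rw [show (N : ℝ) * (π * m / N) / 2 = π * m / 2 by field_simp,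
    show ((N : ℝ) - 1) * (π * m / N) / 2 = π * m / 2 - π * m / N / 2 by field_simp,
    cos_sub] at key
  refine mul_left_cancel₀ hsin ?_
  rw [key, ← hsq]
  linear_combination cos (π * m / N / 2) * hprod

/-- For `0 ≤ x, y ≤ N` this counts the `m`-step `±1` paths from `x` to `y` inside `(0, N)`: the
functions `x ↦ sin (π j x / N)` diagonalise the step operator with Dirichlet boundary values, with
eigenvalues `2 cos (π j / N)`. -/
noncomputable def sineKernel (N m : ℕ) (x y : ℤ) : ℝ :=
  2 / N * ∑ j ∈ range N, (2 * cos (π * j / N)) ^ m * (sin (π * j / N * x) * sin (π * j / N * y))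

theorem not_dvd_of_ne_zero_of_abs_lt {n m : ℤ} (hm : m ≠ 0) (h : |m| < n) : ¬ n ∣ m :=
  fun hd ↦ hm (Int.eq_zero_of_abs_lt_dvd hd h)

theorem sineKernel_zero {N : ℕ} (hN : N ≠ 0) {x y : ℤ} (hx₀ : 0 ≤ x) (hxN : x ≤ N)
    (hy₀ : 0 < y) (hyN : y < N) : sineKernel N 0 x y = if x = y then 1 else 0 := by
  have hNR : (N : ℝ) ≠ 0 := Nat.cast_ne_zero.2 hN
  have hprod (j : ℕ) : sin (π * j / N * x) * sin (π * j / N * y) =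
      (cos (π * ↑(x - y) / N * j) - cos (π * ↑(x + y) / N * j)) / 2 := by
    push_cast
    rw [show π * (x - y) / N * j = π * j / N * x - π * j / N * y by ring,
      show π * (x + y) / N * j = π * j / N * x + π * j / N * y by ring, cos_sub, cos_add]
    ring
  have hsum : sineKernel N 0 x y = (∑ j ∈ range N, cos (π * ↑(x - y) / N * j)
      - ∑ j ∈ range N, cos (π * ↑(x + y) / N * j)) / N := by
    simp only [sineKernel, pow_zero, one_mul, hprod, ← sum_div, sum_sub_distrib]
    field_simp
  have hsum_add : ∑ j ∈ range N, cos (π * ↑(x + y) / N * j) = (1 - cos (π * ↑(x + y))) / 2 :=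
    sum_range_cos_pi_mul hN (not_dvd_of_ne_zero_of_abs_lt (by omega)
      (by rw [abs_of_pos (by omega)]; omega))
  split_ifs with hxy
  · subst hxy
    have hcos : cos (π * ↑(x + x)) = 1 := by
      rw [show π * ↑(x + x) = x * (2 * π) by push_cast; ring, cos_int_mul_two_pi]
    rw [hsum, hsum_add, hcos]
    simp [hNR]
  · have hsum_sub : ∑ j ∈ range N, cos (π * ↑(x - y) / N * j) = (1 - cos (π * ↑(x - y))) / 2 :=
      sum_range_cos_pi_mul hN (not_dvd_of_ne_zero_of_abs_lt (by omega)
        (abs_lt.2 ⟨by omega, by omega⟩))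
    have hcos : cos (π * ↑(x + y)) = cos (π * ↑(x - y)) := by
      rw [show π * ↑(x + y) = π * ↑(x - y) + y * (2 * π) by push_cast; ring,
        cos_add_int_mul_two_pi]
    rw [hsum, hsum_sub, hsum_add, hcos, sub_self, zero_div]

theorem sineKernel_succ (N m : ℕ) (x y : ℤ) :
    sineKernel N (m + 1) x y = sineKernel N m (x - 1) y + sineKernel N m (x + 1) y := by
  simp only [sineKernel, ← mul_add, ← sum_add_distrib]
  congr 1
  refine sum_congr rfl fun j _ ↦ ?_
  push_cast
  simp only [mul_sub, mul_add, mul_one, sin_sub, sin_add, pow_succ]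
  ring

theorem sineKernel_zero_left (N m : ℕ) (y : ℤ) : sineKernel N m 0 y = 0 := by
  simp [sineKernel]

theorem sineKernel_self_left {N : ℕ} (hN : N ≠ 0) (m : ℕ) (y : ℤ) : sineKernel N m N y = 0 := by
  have hNR : (N : ℝ) ≠ 0 := Nat.cast_ne_zero.2 hN
  refine mul_eq_zero_of_right _ (sum_eq_zero fun j _ ↦ ?_)
  have : sin (π * j) = 0 := by rw [mul_comm]; exact sin_nat_mul_pi j
  rw [Int.cast_natCast, div_mul_cancel₀ _ hNR, this, zero_mul, mul_zero]

/-- Both sides satisfy the recursion of `exitCount_succ` and vanish at `x = 0` and `x = N`. -/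
theorem exitCount_succ_eq_sineKernel {N : ℕ} (hN : 2 ≤ N) (m : ℕ) {x : ℤ} (hx₀ : 0 ≤ x)
    (hxN : x ≤ N) :
    (exitCount N (m + 1) x : ℝ) = sineKernel N m x 1 + sineKernel N m x (N - 1) := by
  induction m generalizing x with
  | zero =>
    rw [sineKernel_zero (by omega) hx₀ hxN (by omega) (by omega),
      sineKernel_zero (by omega) hx₀ hxN (by omega) (by omega), exitCount_succ, exitCount_zero,
      exitCount_zero]
    split_ifs <;> first | omega | norm_num
  | succ m ih =>
    rw [exitCount_succ]
    by_cases hx : x ≠ 0 ∧ x ≠ N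
    · rw [if_pos hx, Nat.cast_add, ih (by omega) (by omega), ih (by omega) (by omega),
        sineKernel_succ, sineKernel_succ]
      ring
    · rw [if_neg hx, Nat.cast_zero]
      obtain rfl | rfl : x = 0 ∨ x = N := by omega
      · rw [sineKernel_zero_left, sineKernel_zero_left, add_zero]
      · rw [sineKernel_self_left (by omega), sineKernel_self_left (by omega), add_zero]

theorem sum_filter_odd_range {M : Type*} [AddCommMonoid M] (f : ℕ → M) (N : ℕ) :
    ∑ j ∈ range N with Odd j, f j = ∑ k ∈ Icc 1 (N / 2), f (2 * k - 1) := by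
  refine sum_nbij' (fun j ↦ (j + 1) / 2) (fun k ↦ 2 * k - 1) ?_ ?_ ?_ ?_ ?_ <;>
    intro j hj <;> simp only [mem_filter, mem_range, mem_Icc, Nat.odd_iff] at hj ⊢
  any_goals omega
  congr 1
  omega

theorem sineKernel_one_add_one_sub {N : ℕ} (hN : N ≠ 0) (m : ℕ) :
    (1 / 2) ^ (m + 1) * (sineKernel N m 1 1 + sineKernel N m 1 (N - 1)) =
      2 / N * ∑ k ∈ Icc 1 (N / 2),
        cos (π * (2 * k - 1) / N) ^ m * sin (π * (2 * k - 1) / N) ^ 2 := by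
  have hNR : (N : ℝ) ≠ 0 := Nat.cast_ne_zero.2 hN
  have hterm (j : ℕ) : (1 / 2 : ℝ) ^ (m + 1) * ((2 * cos (π * j / N)) ^ m *
        (sin (π * j / N * (1 : ℤ)) * (sin (π * j / N * (1 : ℤ)) +
          sin (π * j / N * ((N : ℤ) - 1 : ℤ)))))
      = if Odd j then cos (π * j / N) ^ m * sin (π * j / N) ^ 2 else 0 := by
    have hrefl : sin (π * j / N * ((N : ℤ) - 1 : ℤ)) = -((-1) ^ j * sin (π * j / N)) := by
      rw [← sin_nat_mul_pi_sub]
      congr 1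
      push_cast
      field_simp
    rw [hrefl, Int.cast_one, mul_one, mul_pow]
    rcases Nat.even_or_odd j with hj | hj
    · rw [if_neg (Nat.not_odd_iff_even.2 hj), hj.neg_one_pow]
      ring
    · have hhalf : (1 / 2 : ℝ) ^ m * 2 ^ m = 1 := by rw [← mul_pow]; norm_num
      rw [if_pos hj, hj.neg_one_pow]
      linear_combination (cos (π * j / N) ^ m * sin (π * j / N) ^ 2) * hhalf
  simp only [sineKernel, ← mul_add, ← sum_add_distrib]
  rw [mul_left_comm, mul_sum]
  simp only [hterm]
  rw [← sum_filter, sum_filter_odd_range]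
  congr 1
  refine sum_congr rfl fun k hk ↦ ?_
  rw [Nat.cast_sub (by rw [mem_Icc] at hk; omega)]
  push_cast
  ring_nf

section Steps

variable {Ω : Type*} {X : ℕ → Ω → ℤ}

def stepEvent (X : ℕ → Ω → ℤ) {n : ℕ} (ε : Fin n → Bool) : Set Ω :=
  ⋂ i ∈ range n, X i ⁻¹' {signs ε i}

theorem mem_stepEvent {n : ℕ} {ε : Fin n → Bool} {ω : Ω} :
    ω ∈ stepEvent X ε ↔ ∀ i < n, X i ω = signs ε i := by
  simp [stepEvent]

theorem pairwise_disjoint_stepEvent {n : ℕ} :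
    Pairwise (Function.onFun Disjoint fun ε : Fin n → Bool ↦ stepEvent X ε) := by
  intro ε ε' hne
  refine Set.disjoint_left.2 fun ω hω hω' ↦ hne (funext fun i ↦ boolSign_injective ?_)
  have h := (mem_stepEvent.1 hω i i.2).symm.trans (mem_stepEvent.1 hω' i i.2)
  simpa [signs] using h

theorem mem_stepEvent_iff_eq {ω : Ω} (hω : ∀ i, X i ω = 1 ∨ X i ω = -1) {n : ℕ}
    {ε : Fin n → Bool} : ω ∈ stepEvent X ε ↔ ε = fun i : Fin n ↦ decide (X i ω = 1) := by
  rw [mem_stepEvent]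
  constructor
  · intro h
    funext i
    have := h i i.2
    simp only [signs, i.2, dif_pos, boolSign] at this
    split_ifs at this <;> simp_all
  · rintro rfl i hi
    rcases hω i with h | h <;> simp [signs, hi, boolSign, h]

variable [MeasurableSpace Ω] {P : Measure Ω}

theorem measurableSet_stepEvent (hmeas : ∀ i, Measurable (X i)) {n : ℕ} (ε : Fin n → Bool) :
    MeasurableSet (stepEvent X ε) :=
  .biInter (Set.to_countable _) fun i _ ↦ hmeas i (measurableSet_singleton _)

theorem measure_stepEvent (hindep : iIndepFun X P) (hup : ∀ i, P {ω | X i ω = 1} = 1 / 2)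
    (hdown : ∀ i, P {ω | X i ω = -1} = 1 / 2) {n : ℕ} (ε : Fin n → Bool) :
    P (stepEvent X ε) = (1 / 2) ^ n := by
  have hstep : ∀ i ∈ range n, P (X i ⁻¹' {signs ε i}) = 1 / 2 := by
    intro i hi
    rw [signs, dif_pos (mem_range.1 hi), boolSign]
    split_ifs
    exacts [hup i, hdown i]
  rw [stepEvent, hindep.measure_inter_preimage_eq_mul _ fun i _ ↦ measurableSet_singleton _,
    prod_congr rfl hstep, prod_const, card_range]

theorem ae_eq_one_or_eq_neg_one [IsProbabilityMeasure P] (hmeas : ∀ i, Measurable (X i))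
    (hup : ∀ i, P {ω | X i ω = 1} = 1 / 2) (hdown : ∀ i, P {ω | X i ω = -1} = 1 / 2) :
    ∀ᵐ ω ∂P, ∀ i, X i ω = 1 ∨ X i ω = -1 := by
  refine ae_all_iff.2 fun i ↦ ?_
  have hm (c : ℤ) : MeasurableSet {ω | X i ω = c} := hmeas i (measurableSet_singleton c)
  have hdisj : Disjoint {ω | X i ω = 1} {ω | X i ω = -1} :=
    Set.disjoint_left.2 fun ω h1 h2 ↦ by simp_all
  have hunion : P ({ω | X i ω = 1} ∪ {ω | X i ω = -1}) = 1 := by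
    rw [measure_union hdisj (hm _), hup, hdown, ENNReal.add_halves]
  rw [← prob_compl_eq_zero_iff ((hm _).union (hm _))] at hunion
  rw [ae_iff]
  convert hunion using 2
  ext ω
  simp [not_or]

theorem measure_setOf_eq_half_pow_mul_card [IsProbabilityMeasure P] (hmeas : ∀ i, Measurable (X i))
    (hindep : iIndepFun X P) (hup : ∀ i, P {ω | X i ω = 1} = 1 / 2)
    (hdown : ∀ i, P {ω | X i ω = -1} = 1 / 2) {n : ℕ} (Q : (ℕ → ℤ) → Prop) [DecidablePred Q]
    (hQ : ∀ d d' : ℕ → ℤ, (∀ i < n, d i = d' i) → (Q d ↔ Q d')) :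
    P {ω | Q fun i ↦ X i ω} = (1 / 2) ^ n * #{ε : Fin n → Bool | Q (signs ε)} := by
  have hae : {ω | Q fun i ↦ X i ω} =ᵐ[P]
      ⋃ ε ∈ ({ε | Q (signs ε)} : Finset (Fin n → Bool)), stepEvent X ε := by
    refine Filter.eventuallyEq_set.2 ?_
    filter_upwards [ae_eq_one_or_eq_neg_one hmeas hup hdown] with ω hω
    have hself := (mem_stepEvent_iff_eq hω (n := n)).2 rfl
    simp only [Set.mem_iUnion, mem_filter, mem_univ, true_and,
      mem_stepEvent_iff_eq hω, exists_prop, exists_eq_right]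
    exact hQ _ _ (mem_stepEvent.1 hself)
  rw [measure_congr hae, measure_biUnion_finset (pairwise_disjoint_stepEvent.set_pairwise _)
      fun ε _ ↦ measurableSet_stepEvent hmeas ε,
    sum_congr rfl fun ε _ ↦ measure_stepEvent hindep hup hdown ε, sum_const, nsmul_eq_mul,
    mul_comm]

end Steps

end RandomWalk

open RandomWalk

/-- Laplace's trigonometric-sum formula for the distribution of the exit time
from `{0,N}` of simple symmetric random walk started at `1`:
`P₁(τ = n) = (2/N) ∑_{k=1}^{⌈(N−1)/2⌉} cos^{n−1}(π(2k−1)/N) sin²(π(2k−1)/N)`.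
(Note `⌈(N−1)/2⌉ = N/2` with natural division.) -/
theorem stmt_5
    {Ω : Type*} [MeasurableSpace Ω] (P : Measure Ω) [IsProbabilityMeasure P]
    (X : ℕ → Ω → ℤ) (hmeas : ∀ i, Measurable (X i))
    (hindep : iIndepFun X P)
    (hup : ∀ i, P {ω | X i ω = 1} = 1/2)
    (hdown : ∀ i, P {ω | X i ω = -1} = 1/2)
    (N : ℕ) (hN : 2 ≤ N)
    (S : ℕ → Ω → ℤ) (hS : ∀ n ω, S n ω = 1 + ∑ i ∈ Finset.range n, X i ω)
    (n : ℕ) (hn : 1 ≤ n) :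
    (P {ω | (S n ω = 0 ∨ S n ω = (N : ℤ)) ∧
        ∀ k < n, S k ω ≠ 0 ∧ S k ω ≠ (N : ℤ)}).toReal
      = (2 / N) * ∑ k ∈ Finset.Icc 1 (N / 2),
          Real.cos (π * (2 * k - 1) / N) ^ (n - 1)
            * Real.sin (π * (2 * k - 1) / N) ^ 2 := by
  obtain rfl : S = fun k ω ↦ walk 1 (fun i ↦ X i ω) k := by
    funext k ω
    exact hS k ω
  obtain ⟨m, rfl⟩ : ∃ m, n = m + 1 := ⟨n - 1, by omega⟩
  have hprob := measure_setOf_eq_half_pow_mul_card hmeas hindep hup hdown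
    (fun d ↦ ExitsAt N (m + 1) (walk 1 d)) fun _ _ h ↦ exitsAt_walk_congr h
  change (P {ω | ExitsAt N (m + 1) (walk 1 fun i ↦ X i ω)}).toReal = _
  rw [hprob, ENNReal.toReal_mul, ENNReal.toReal_natCast, ENNReal.toReal_pow,
    Nat.add_sub_cancel, ← sineKernel_one_add_one_sub (by omega),
    ← exitCount_succ_eq_sineKernel hN m zero_le_one (by omega), exitCount]
  norm_num
end

section
/- Summing the Laplace distribution formula yields the tail identity: P_1(τ_{0,N} > n) = (2/N)[S_0(N, m_N, n) + S_0(N, m_N, n+1)], where S_0(N,m,n) = Σ_{k=1}^m cos^n(π(2k−1)/N) and m_N = ⌈(N−1)/2⌉. -/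
/-!
The function `u n x = P_x(τ > n)` on `{0, …, N}` is determined by `u n 0 = u n N = 0`,
`u 0 x = 1` inside, and the first-step recursion `u (n+1) x = (u n (x-1) + u n (x+1)) / 2`.
The sine modes `sin (x θ_k)` with `θ_k = π (2k - 1) / N` vanish at both ends and are
eigenfunctions of the averaging operator with eigenvalue `cos θ_k`, so
`(2/N) ∑_k cot (θ_k/2) sin (x θ_k) cos^n θ_k` satisfies the same recursion. Its initial
values are `1`: at `x = 1` because `cot (θ/2) sin θ = 1 + cos θ`, and consecutive
differences are `∑_k (cos ((j+1) θ_k) + cos (j θ_k))`, which vanish by the closed form of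
`∑_k cos (j θ_k)` (a telescoping sum of sines).
-/

open MeasureTheory ProbabilityTheory Real

theorem two_mul_sin_mul_sum_cos_odd_mul (α : ℝ) (m : ℕ) :
    2 * sin α * ∑ k ∈ Finset.Icc 1 m, cos ((2 * k - 1) * α) = sin (2 * m * α) := by
  induction m with
  | zero => simp
  | succ m ih =>
    rw [Finset.sum_Icc_succ_top (by omega), mul_add, ih, two_mul_sin_mul_cos]
    push_cast
    ring_nf
    rw [sin_neg]
    ring

theorem cot_half_mul_sin (θ : ℝ) (h : sin (θ / 2) ≠ 0) : cot (θ / 2) * sin θ = 1 + cos θ := by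
  obtain ⟨φ, rfl⟩ : ∃ φ, θ = 2 * φ := ⟨θ / 2, by ring⟩
  rw [mul_div_cancel_left₀ φ two_ne_zero] at h ⊢
  rw [cot_eq_cos_div_sin, sin_two_mul, cos_two_mul]
  field_simp
  ring

theorem cot_half_mul_sin_sub_sin (θ a : ℝ) (h : sin (θ / 2) ≠ 0) :
    cot (θ / 2) * (sin ((a + 1) * θ) - sin (a * θ)) = cos ((a + 1) * θ) + cos (a * θ) := by
  rw [cot_eq_cos_div_sin, sin_sub_sin, cos_add_cos,
    show ((a + 1) * θ - a * θ) / 2 = θ / 2 by ring]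
  field_simp

section SpectralSeries

noncomputable def angle (N k : ℕ) : ℝ := π * (2 * k - 1) / N

theorem sin_half_angle_pos {N k : ℕ} (hk : k ∈ Finset.Icc 1 (N / 2)) :
    0 < sin (angle N k / 2) := by
  rw [Finset.mem_Icc] at hk
  have hk1 : (1 : ℝ) ≤ k := by exact_mod_cast hk.1
  have hkN : 2 * (k : ℝ) ≤ N := by exact_mod_cast (by omega : 2 * k ≤ N)
  unfold angle
  apply sin_pos_of_pos_of_lt_pi
  · exact div_pos (div_pos (mul_pos pi_pos (by linarith)) (by linarith)) two_pos
  · rw [div_div, div_lt_iff₀ (by linarith)]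
    nlinarith [pi_pos]

theorem two_mul_sum_cos_mul_angle {N j : ℕ} (hj : 0 < j) (hjN : j < N) :
    2 * ∑ k ∈ Finset.Icc 1 (N / 2), cos (j * angle N k)
      = if Even N then 0 else (-1) ^ (j + 1) := by
  have hN : (0 : ℝ) < N := by exact_mod_cast (by omega : 0 < N)
  have hjN' : (j : ℝ) < N := by exact_mod_cast hjN
  have hj' : (0 : ℝ) < j := by exact_mod_cast hj
  set α := π * j / N
  have hα : 0 < sin α := sin_pos_of_pos_of_lt_pi (by positivity) (by
    rw [div_lt_iff₀ hN]; nlinarith [pi_pos])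
  have hrw : ∀ k ∈ Finset.Icc 1 (N / 2), cos (j * angle N k) = cos ((2 * k - 1) * α) := by
    intro k _; unfold angle α; congr 1; field_simp
  rw [Finset.sum_congr rfl hrw, ← mul_right_inj' hα.ne', ← mul_assoc, mul_comm (sin α),
    two_mul_sin_mul_sum_cos_odd_mul]
  rcases Nat.even_or_odd' N with ⟨m, rfl | rfl⟩
  · have hm : (m : ℝ) ≠ 0 := by exact_mod_cast (by omega : m ≠ 0)
    rw [if_pos (even_two_mul m), show 2 * ((2 * m / 2 : ℕ) : ℝ) * α = j * π by
      rw [Nat.mul_div_cancel_left m two_pos]; unfold α; push_cast; field_simp]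
    simp [sin_nat_mul_pi]
  · rw [if_neg (Nat.not_even_two_mul_add_one m),
      show 2 * (((2 * m + 1) / 2 : ℕ) : ℝ) * α = j * π - α by
        rw [show (2 * m + 1) / 2 = m by omega]; unfold α; push_cast; field_simp; ring,
      sin_nat_mul_pi_sub]
    ring

noncomputable def survivalSeries (N n : ℕ) (x : ℝ) : ℝ :=
  2 / N * ∑ k ∈ Finset.Icc 1 (N / 2),
    cot (angle N k / 2) * sin (x * angle N k) * cos (angle N k) ^ n

theorem survivalSeries_at_zero (N n : ℕ) : survivalSeries N n 0 = 0 := by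
  simp [survivalSeries]

theorem survivalSeries_at_self (N n : ℕ) : survivalSeries N n N = 0 := by
  rcases eq_or_ne N 0 with rfl | hN
  · simp [survivalSeries]
  refine mul_eq_zero_of_right _ (Finset.sum_eq_zero fun k hk => ?_)
  have hk : 1 ≤ k := (Finset.mem_Icc.mp hk).1
  have : (N : ℝ) * angle N k = ((2 * k - 1 : ℕ) : ℝ) * π := by
    unfold angle; push_cast [Nat.cast_sub (by omega : 1 ≤ 2 * k)]; field_simp
  rw [this, sin_nat_mul_pi, mul_zero, zero_mul]

theorem survivalSeries_succ (N n : ℕ) (x : ℝ) :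
    survivalSeries N (n + 1) x
      = (survivalSeries N n (x - 1) + survivalSeries N n (x + 1)) / 2 := by
  simp only [survivalSeries, ← mul_add, ← Finset.sum_add_distrib, mul_div_assoc, Finset.sum_div]
  congr 1
  refine Finset.sum_congr rfl fun k _ => ?_
  rw [sub_mul, add_mul, one_mul, sin_sub, sin_add]
  ring

theorem survivalSeries_one (N n : ℕ) :
    survivalSeries N n 1
      = 2 / N * ∑ k ∈ Finset.Icc 1 (N / 2), (1 + cos (angle N k)) * cos (angle N k) ^ n := by
  unfold survivalSeries
  congr 1
  refine Finset.sum_congr rfl fun k hk => ?_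
  rw [one_mul, cot_half_mul_sin _ (sin_half_angle_pos hk).ne']

theorem survivalSeries_zero_one {N : ℕ} (hN : 1 < N) : survivalSeries N 0 1 = 1 := by
  have hcos := two_mul_sum_cos_mul_angle (N := N) (j := 1) one_pos hN
  simp only [Nat.cast_one, one_mul] at hcos
  have hN' : (N : ℝ) ≠ 0 := by positivity
  rw [survivalSeries_one]
  simp only [pow_zero, mul_one, Finset.sum_add_distrib, Finset.sum_const, Nat.card_Icc,
    Nat.add_sub_cancel, nsmul_eq_mul]
  rcases Nat.even_or_odd' N with ⟨m, rfl | rfl⟩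
  · rw [if_pos (even_two_mul m)] at hcos
    rw [Nat.mul_div_cancel_left m two_pos] at hcos ⊢
    field_simp
    push_cast
    linarith
  · rw [if_neg (Nat.not_even_two_mul_add_one m)] at hcos
    rw [show (2 * m + 1) / 2 = m by omega] at hcos ⊢
    norm_num at hcos
    field_simp
    push_cast
    linarith

theorem survivalSeries_zero_succ {N x : ℕ} (hx : 0 < x) (hxN : x + 1 < N) :
    survivalSeries N 0 (x + 1) = survivalSeries N 0 x := by
  have hpair := congrArg₂ (· + ·) (two_mul_sum_cos_mul_angle (N := N) (j := x + 1) (by omega) hxN)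
    (two_mul_sum_cos_mul_angle (N := N) (j := x) hx (by omega))
  rw [← sub_eq_zero, survivalSeries, survivalSeries, ← mul_sub, ← Finset.sum_sub_distrib]
  refine mul_eq_zero_of_right _ ?_
  calc _ = ∑ k ∈ Finset.Icc 1 (N / 2), (cos ((x + 1) * angle N k) + cos (x * angle N k)) := by
        refine Finset.sum_congr rfl fun k hk => ?_
        rw [pow_zero, mul_one, mul_one, ← mul_sub,
          cot_half_mul_sin_sub_sin _ _ (sin_half_angle_pos hk).ne']
    _ = 0 := by
        rw [Finset.sum_add_distrib]
        push_cast at hpair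
        split_ifs at hpair <;> linear_combination hpair / 2

theorem survivalSeries_zero_eq_one {N x : ℕ} (hx : 0 < x) (hxN : x < N) :
    survivalSeries N 0 x = 1 := by
  induction x, hx using Nat.le_induction with
  | base => exact_mod_cast survivalSeries_zero_one hxN
  | succ x hx ih =>
    push_cast
    rw [survivalSeries_zero_succ hx hxN, ih (by omega)]

end SpectralSeries

section Walk

variable {Ω : Type*}

def walk (X : ℕ → Ω → ℤ) (s : ℕ) (x : ℤ) (k : ℕ) (ω : Ω) : ℤ :=
  x + ∑ i ∈ Finset.range k, X (s + i) ω

def survivalEvent (X : ℕ → Ω → ℤ) (N s : ℕ) (x : ℤ) (n : ℕ) : Set Ω :=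
  {ω | ∀ k ≤ n, walk X s x k ω ≠ 0 ∧ walk X s x k ω ≠ N}

variable {X : ℕ → Ω → ℤ} {N s : ℕ} {x : ℤ} {n : ℕ}

@[simp] theorem walk_zero (X : ℕ → Ω → ℤ) (s : ℕ) (x : ℤ) (ω : Ω) : walk X s x 0 ω = x := by
  simp [walk]

theorem walk_succ (X : ℕ → Ω → ℤ) (s : ℕ) (x : ℤ) (k : ℕ) (ω : Ω) :
    walk X s x (k + 1) ω = walk X (s + 1) (x + X s ω) k ω := by
  simp only [walk, Finset.sum_range_succ', add_zero, add_assoc, add_comm 1, add_left_comm s]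
  ring

theorem survivalEvent_eq_empty (hx : x = 0 ∨ x = N) : survivalEvent X N s x n = ∅ :=
  Set.eq_empty_of_forall_notMem fun ω h => by
    have := h 0 (Nat.zero_le n)
    rw [walk_zero] at this
    tauto

theorem survivalEvent_zero (h0 : x ≠ 0) (hN : x ≠ N) : survivalEvent X N s x 0 = Set.univ :=
  Set.eq_univ_of_forall fun ω k hk => by simp_all [Nat.le_zero.mp hk]

theorem survivalEvent_succ_inter (h0 : x ≠ 0) (hN : x ≠ N) (c : ℤ) :
    survivalEvent X N s x (n + 1) ∩ {ω | X s ω = c}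
      = survivalEvent X N (s + 1) (x + c) n ∩ {ω | X s ω = c} := by
  ext ω
  simp only [survivalEvent, Set.mem_inter_iff, Set.mem_ofPred_eq, and_congr_left_iff]
  intro hc
  simp only [← Nat.lt_add_one_iff, Nat.forall_lt_succ_left, walk_zero, walk_succ, hc]
  tauto

theorem measurableSet_survivalEvent {m : MeasurableSpace Ω}
    (hX : ∀ i, s ≤ i → Measurable[m] (X i)) : MeasurableSet[m] (survivalEvent X N s x n) := by
  have hwalk : ∀ k, Measurable[m] (walk X s x k) := fun k =>
    (Finset.measurable_sum _ fun i _ => hX (s + i) (by omega)).const_add x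
  simp only [survivalEvent, Set.ofPred_forall]
  exact MeasurableSet.iInter fun k => MeasurableSet.iInter fun _ =>
    ((hwalk k) (measurableSet_singleton 0).compl).inter ((hwalk k) (measurableSet_singleton _).compl)

end Walk

section Independence

variable {Ω : Type*} [MeasurableSpace Ω] {P : Measure Ω} {X : ℕ → Ω → ℤ}

theorem measureReal_survivalEvent_inter (hmeas : ∀ i, Measurable (X i)) (hindep : iIndepFun X P)
    (N s : ℕ) (y : ℤ) (n : ℕ) (c : ℤ) :
    P.real (survivalEvent X N (s + 1) y n ∩ {ω | X s ω = c})
      = P.real (survivalEvent X N (s + 1) y n) * P.real {ω | X s ω = c} := by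
  let m : ℕ → MeasurableSpace Ω := fun i => MeasurableSpace.comap (X i) inferInstance
  have hind : Indep (⨆ i ∈ Set.Ioi s, m i) (⨆ i ∈ ({s} : Set ℕ), m i) P :=
    indep_iSup_of_disjoint (fun i => (hmeas i).comap_le) (iIndepFun_iff_iIndep _ _ _ |>.mp hindep)
      (Set.disjoint_singleton_right.mpr (lt_irrefl s))
  have hfuture : MeasurableSet[⨆ i ∈ Set.Ioi s, m i] (survivalEvent X N (s + 1) y n) :=
    measurableSet_survivalEvent fun i hi =>
      Measurable.of_comap_le (le_iSup₂ (f := fun i (_ : i ∈ Set.Ioi s) => m i) i hi)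
  have hpresent : MeasurableSet[⨆ i ∈ ({s} : Set ℕ), m i] {ω | X s ω = c} :=
    le_iSup₂ (f := fun i (_ : i ∈ ({s} : Set ℕ)) => m i) s rfl _
      ⟨{c}, measurableSet_singleton c, rfl⟩
  simp only [measureReal_def, (Indep_iff _ _ _).mp hind _ _ hfuture hpresent, ENNReal.toReal_mul]

variable [IsProbabilityMeasure P] (hmeas : ∀ i, Measurable (X i)) (hindep : iIndepFun X P)
  (hup : ∀ i, P {ω | X i ω = 1} = 1 / 2) (hdown : ∀ i, P {ω | X i ω = -1} = 1 / 2)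
include hmeas hindep hup hdown

theorem measureReal_survivalEvent_succ {N s : ℕ} {x : ℤ} (h0 : x ≠ 0) (hN : x ≠ N) (n : ℕ) :
    P.real (survivalEvent X N s x (n + 1))
      = (P.real (survivalEvent X N (s + 1) (x - 1) n)
          + P.real (survivalEvent X N (s + 1) (x + 1) n)) / 2 := by
  let A : ℤ → Set Ω := fun c => {ω | X s ω = c}
  have hA : ∀ c, MeasurableSet (A c) := fun c => hmeas s (measurableSet_singleton c)
  have hdisj : Disjoint (A 1) (A (-1)) :=
    Set.disjoint_left.mpr fun ω (h1 : X s ω = 1) (h2 : X s ω = -1) => by omega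
  have hstep : P (A 1 ∪ A (-1))ᶜ = 0 := by
    rw [prob_compl_eq_zero_iff ((hA 1).union (hA _)), measure_union hdisj (hA _), hup, hdown,
      ENNReal.add_halves]
  have hA_up : P.real (A 1) = 1 / 2 := by simp [A, measureReal_def, hup]
  have hA_down : P.real (A (-1)) = 1 / 2 := by simp [A, measureReal_def, hdown]
  let E := survivalEvent X N s x (n + 1)
  calc P.real E = P.real (E ∩ A 1) + P.real (E ∩ A (-1)) := by
        rw [← measureReal_union (hdisj.mono Set.inter_subset_right Set.inter_subset_right)
          (measurableSet_survivalEvent (fun i _ => hmeas i) |>.inter (hA _)),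
          ← Set.inter_union_distrib_left, measureReal_def, measureReal_def,
          measure_inter_conull hstep]
    _ = _ := by
        rw [survivalEvent_succ_inter h0 hN, survivalEvent_succ_inter h0 hN,
          measureReal_survivalEvent_inter hmeas hindep, measureReal_survivalEvent_inter hmeas hindep,
          hA_up, hA_down, ← sub_eq_add_neg]
        ring

theorem measureReal_survivalEvent_eq_survivalSeries {N : ℕ} (n s : ℕ) {x : ℤ}
    (hx0 : 0 ≤ x) (hxN : x ≤ N) :
    P.real (survivalEvent X N s x n) = survivalSeries N n x := by
  obtain rfl | rfl | ⟨h0, hN⟩ : x = 0 ∨ x = N ∨ (0 < x ∧ x < N) := by omega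
  · simp [survivalEvent_eq_empty, survivalSeries_at_zero]
  · simp [survivalEvent_eq_empty, survivalSeries_at_self]
  cases n with
  | zero =>
    lift x to ℕ using hx0
    rw [survivalEvent_zero h0.ne' hN.ne, probReal_univ, Int.cast_natCast,
      survivalSeries_zero_eq_one (by omega) (by omega)]
  | succ n =>
    rw [measureReal_survivalEvent_succ hmeas hindep hup hdown h0.ne' hN.ne,
      measureReal_survivalEvent_eq_survivalSeries n (s + 1) (x := x - 1) (by omega) (by omega),
      measureReal_survivalEvent_eq_survivalSeries n (s + 1) (x := x + 1) (by omega) hN,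
      survivalSeries_succ]
    push_cast
    rfl

end Independence

/-- Tail identity for the exit time from `{0,N}` of simple symmetric random
walk started at `1`:
`P₁(τ > n) = (2/N)(S₀(N, m_N, n) + S₀(N, m_N, n+1))`, where
`S₀(N,m,n) = ∑_{k=1}^m cos^n(π(2k−1)/N)` and `m_N = ⌈(N−1)/2⌉ = N/2` (natural
division). -/
theorem stmt_6
    {Ω : Type*} [MeasurableSpace Ω] (P : Measure Ω) [IsProbabilityMeasure P]
    (X : ℕ → Ω → ℤ) (hmeas : ∀ i, Measurable (X i))
    (hindep : iIndepFun X P)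
    (hup : ∀ i, P {ω | X i ω = 1} = 1/2)
    (hdown : ∀ i, P {ω | X i ω = -1} = 1/2)
    (N : ℕ) (hN : 2 ≤ N)
    (S : ℕ → Ω → ℤ) (hS : ∀ n ω, S n ω = 1 + ∑ i ∈ Finset.range n, X i ω)
    (S₀ : ℕ → ℕ → ℝ)
    (hS₀ : ∀ m n, S₀ m n = ∑ k ∈ Finset.Icc 1 m, Real.cos (π * (2 * k - 1) / N) ^ n)
    (n : ℕ) :
    (P {ω | ∀ k ≤ n, S k ω ≠ 0 ∧ S k ω ≠ (N : ℤ)}).toReal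
      = (2 / N) * (S₀ (N / 2) n + S₀ (N / 2) (n + 1)) := by
  have hevent : {ω | ∀ k ≤ n, S k ω ≠ 0 ∧ S k ω ≠ (N : ℤ)} = survivalEvent X N 0 1 n := by
    simp only [survivalEvent, walk, hS, zero_add]
  rw [hevent, ← measureReal_def,
    measureReal_survivalEvent_eq_survivalSeries hmeas hindep hup hdown n 0 zero_le_one
      (by exact_mod_cast (by omega : 1 ≤ N)),
    Int.cast_one, survivalSeries_one, hS₀, hS₀, ← Finset.sum_add_distrib]
  congr 1
  refine Finset.sum_congr rfl fun k _ => ?_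
  rw [angle]
  ring
end

section
/- For any real-valued random variable X, reals a ≤ b, and a monotone differentiable function g, the restricted expectation satisfies the integration-by-parts formula E[g(X) 1{a < X ≤ b}] = g(a)P(X > a) − g(b)P(X > b) + ∫_a^b g'(y) P(X > y) dy. -/
/-!
Under the law `μ` of `X`, write `g x = g a + ∫_a^x g'` on `(a, b]`. Fubini on the triangle
`a < y < x ≤ b` turns `∫_(a,b] (∫_a^x g') dμ(x)` into `∫_a^b g'(y) μ(y, b] dy`, and
`μ(y, b] = μ(y, ∞) - μ(b, ∞)` together with `∫_a^b g' = g b - g a` rearranges into the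
formula.
A monotone `g` has a derivative of constant sign, which is therefore integrable.
-/

open MeasureTheory Set

section
variable {μ : Measure ℝ} [IsFiniteMeasure μ] {a b : ℝ} {g g' : ℝ → ℝ}

theorem setIntegral_Ioc_intervalIntegral_swap {f : ℝ → ℝ} (hab : a ≤ b)
    (hf : IntervalIntegrable f volume a b) :
    ∫ x in Ioc a b, (∫ y in a..x, f y) ∂μ = ∫ y in a..b, f y * μ.real (Ioc y b) := by
  set F : ℝ × ℝ → ℝ := {p | p.2 < p.1}.indicator fun p ↦ f p.2
  have hF : Integrable F ((μ.restrict (Ioc a b)).prod (volume.restrict (Ioc a b))) :=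
    (((intervalIntegrable_iff_integrableOn_Ioc_of_le hab).1 hf).comp_snd _).indicator
      (measurableSet_lt measurable_snd measurable_fst)
  have hleft : ∀ x ∈ Ioc a b, ∫ y in Ioc a b, F (x, y) = ∫ y in a..x, f y := by
    intro x hx
    have hset : Ioc a b ∩ Iio x = Ioo a x := by
      ext z; simp only [mem_inter_iff, mem_Ioc, mem_Iio, mem_Ioo]; grind
    change ∫ y in Ioc a b, (Iio x).indicator f y = _
    rw [integral_indicator measurableSet_Iio, Measure.restrict_restrict measurableSet_Iio,
      Set.inter_comm, hset, ← integral_Ioc_eq_integral_Ioo,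
      intervalIntegral.integral_of_le hx.1.le]
  have hright : ∀ y ∈ Ioc a b, ∫ x in Ioc a b, F (x, y) ∂μ = f y * μ.real (Ioc y b) := by
    intro y hy
    change ∫ x in Ioc a b, (Ioi y).indicator (fun _ ↦ f y) x ∂μ = _
    rw [integral_indicator measurableSet_Ioi, Measure.restrict_restrict measurableSet_Ioi,
      Set.inter_comm, Ioc_inter_Ioi, max_eq_right hy.1.le, setIntegral_const, smul_eq_mul, mul_comm]
  calc ∫ x in Ioc a b, (∫ y in a..x, f y) ∂μ
      = ∫ x in Ioc a b, (∫ y in Ioc a b, F (x, y)) ∂μ :=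
        (setIntegral_congr_fun measurableSet_Ioc hleft).symm
    _ = ∫ y in Ioc a b, ∫ x in Ioc a b, F (x, y) ∂μ :=
        integral_integral_swap (f := fun x y ↦ F (x, y)) hF
    _ = ∫ y in Ioc a b, f y * μ.real (Ioc y b) := setIntegral_congr_fun measurableSet_Ioc hright
    _ = ∫ y in a..b, f y * μ.real (Ioc y b) := (intervalIntegral.integral_of_le hab).symm

theorem setIntegral_Ioc_eq_of_hasDerivAt (hab : a ≤ b)
    (hg : ∀ y ∈ Icc a b, HasDerivAt g (g' y) y) (hg' : IntervalIntegrable g' volume a b) :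
    ∫ x in Ioc a b, g x ∂μ
      = g a * μ.real (Ioi a) - g b * μ.real (Ioi b) + ∫ y in a..b, g' y * μ.real (Ioi y) := by
  have hFTC : ∀ x ∈ Icc a b, ∫ y in a..x, g' y = g x - g a := fun x hx ↦
    have hsub : uIcc a x ⊆ Icc a b := uIcc_subset_Icc (left_mem_Icc.2 hab) hx
    intervalIntegral.integral_eq_sub_of_hasDerivAt (fun y hy ↦ hg y (hsub hy))
      (hg'.mono_set (by rwa [uIcc_of_le hab]))
  have htail : ∀ y ≤ b, μ.real (Ioc y b) = μ.real (Ioi y) - μ.real (Ioi b) := fun y hy ↦ by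
    rw [← Ioi_sdiff_Ioi, measureReal_sdiff (Ioi_subset_Ioi hy) measurableSet_Ioi]
  have hprimitive : IntegrableOn (fun x ↦ ∫ y in a..x, g' y) (Ioc a b) μ := by
    refine (ContinuousOn.integrableOn_Icc ?_).mono_set Ioc_subset_Icc_self
    simpa [uIcc_of_le hab] using intervalIntegral.continuousOn_primitive_interval' hg' left_mem_uIcc
  have hweighted : IntervalIntegrable (fun y ↦ g' y * μ.real (Ioi y)) volume a b := by
    rw [intervalIntegrable_iff_integrableOn_Ioc_of_le hab] at hg' ⊢
    refine hg'.mul_bdd (c := μ.real univ) ?_ (ae_of_all _ fun y ↦ ?_)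
    · exact (Antitone.measurable fun y z h ↦
        measureReal_mono (Ioi_subset_Ioi h)).aestronglyMeasurable
    · rw [Real.norm_of_nonneg measureReal_nonneg]
      exact measureReal_mono (subset_univ _)
  calc ∫ x in Ioc a b, g x ∂μ
      = ∫ x in Ioc a b, (g a + ∫ y in a..x, g' y) ∂μ :=
        setIntegral_congr_fun measurableSet_Ioc fun x hx ↦ by
          rw [hFTC x (Ioc_subset_Icc_self hx)]; ring
    _ = g a * μ.real (Ioc a b) + ∫ y in a..b, g' y * μ.real (Ioc y b) := by
        rw [integral_add (integrable_const _) hprimitive, setIntegral_const,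
          setIntegral_Ioc_intervalIntegral_swap hab hg', smul_eq_mul, mul_comm]
    _ = g a * (μ.real (Ioi a) - μ.real (Ioi b))
          + ∫ y in a..b, (g' y * μ.real (Ioi y) - g' y * μ.real (Ioi b)) := by
        rw [htail a hab]
        congr 1
        refine intervalIntegral.integral_congr fun y hy ↦ ?_
        rw [uIcc_of_le hab] at hy
        simp only [htail y hy.2, mul_sub]
    _ = g a * μ.real (Ioi a) - g b * μ.real (Ioi b) + ∫ y in a..b, g' y * μ.real (Ioi y) := by
        rw [intervalIntegral.integral_sub hweighted (hg'.mul_const _),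
          intervalIntegral.integral_mul_const, hFTC b (right_mem_Icc.2 hab)]
        ring

theorem Monotone.intervalIntegrable_of_hasDerivAt (hg : Monotone g)
    (hg' : ∀ y, HasDerivAt g (g' y) y) : IntervalIntegrable g' volume a b :=
  intervalIntegral.intervalIntegrable_deriv_of_nonneg
    (continuous_iff_continuousAt.2 fun y ↦ (hg' y).continuousAt).continuousOn
    (fun y _ ↦ hg' y) fun y _ ↦ (hg' y).deriv ▸ hg.deriv_nonneg

end

/-- Integration-by-parts formula for restricted expectations: for a real
random variable `X`, reals `a ≤ b`, and a monotone differentiable `g`,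
`E[g(X) 1{a < X ≤ b}] = g(a)P(X > a) − g(b)P(X > b) + ∫_a^b g'(y)P(X > y) dy`. -/
theorem stmt_7
    {Ω : Type*} [MeasurableSpace Ω] (P : Measure Ω) [IsProbabilityMeasure P]
    (X : Ω → ℝ) (hX : Measurable X)
    (a b : ℝ) (hab : a ≤ b)
    (g g' : ℝ → ℝ) (hg : Monotone g ∨ Antitone g)
    (hg' : ∀ y, HasDerivAt g (g' y) y) :
    ∫ ω in {ω | a < X ω ∧ X ω ≤ b}, g (X ω) ∂P
      = g a * (P {ω | a < X ω}).toReal - g b * (P {ω | b < X ω}).toReal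
        + ∫ y in a..b, g' y * (P {ω | y < X ω}).toReal := by
  have hint : IntervalIntegrable g' volume a b := by
    rcases hg with hmono | hanti
    · exact hmono.intervalIntegrable_of_hasDerivAt hg'
    · simpa using (hanti.neg.intervalIntegrable_of_hasDerivAt (g' := -g') (a := a) (b := b)
        fun y ↦ (hg' y).neg).neg
  have htail : ∀ y, (P {ω | y < X ω}).toReal = (P.map X).real (Ioi y) := fun y ↦ by
    rw [measureReal_def, Measure.map_apply hX measurableSet_Ioi]
    rfl
  have hgc : Continuous g := continuous_iff_continuousAt.2 fun y ↦ (hg' y).continuousAt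
  rw [show {ω | a < X ω ∧ X ω ≤ b} = X ⁻¹' Ioc a b from rfl,
    ← setIntegral_map measurableSet_Ioc hgc.aestronglyMeasurable hX.aemeasurable]
  simp only [htail]
  exact setIntegral_Ioc_eq_of_hasDerivAt hab (fun y _ ↦ hg' y) hint
end

section
/- The theta-type series H(y) = Σ_{k≥1} exp(−π²(2k−1)²y/2) satisfies 2H(y)√(2πy) → 1 as y ↓ 0. -/
/-!
Poisson summation in the guise of the functional equation of the even Hurwitz kernel at `a = 1/2`:
the series `2 H(y)` is `evenKernel (1/2) t` at `t = 2πy`, and `evenKernel a t * √t = cosKernel a (1/t)`.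
As `y ↓ 0` the argument `1/t` tends to `∞`, where `cosKernel a` tends to its constant term `1`
(its other terms `cos (2πna) e^{-πn²/t}` decay exponentially).
-/

open Real Filter Topology

namespace HurwitzZeta

lemma hasSum_nat_evenKernel_half {t : ℝ} (ht : 0 < t) :
    HasSum (fun k : ℕ => 2 * rexp (-π * ((k : ℝ) + 1 / 2) ^ 2 * t))
      (evenKernel ((1 / 2 : ℝ) : UnitAddCircle) t) := by
  refine (hasSum_int_evenKernel (1 / 2 : ℝ) ht).nat_add_neg_add_one.congr_fun fun k => ?_
  push_cast
  ring_nf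

lemma evenKernel_mul_sqrt (a : UnitAddCircle) {t : ℝ} (ht : 0 < t) :
    evenKernel a t * √t = cosKernel a (1 / t) := by
  rw [evenKernel_functional_equation, sqrt_eq_rpow, one_div_mul_eq_div,
    div_mul_cancel₀ _ (by positivity)]

lemma tendsto_cosKernel_atTop (a : UnitAddCircle) : Tendsto (cosKernel a) atTop (𝓝 1) := by
  obtain ⟨p, hp, hO⟩ := isBigO_atTop_cosKernel_sub a
  have hexp : Tendsto (fun x : ℝ => rexp (-p * x)) atTop (𝓝 0) :=
    tendsto_exp_atBot.comp (tendsto_id.const_mul_atTop_of_neg (neg_lt_zero.2 hp))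
  simpa using (hO.trans_tendsto hexp).add_const 1

end HurwitzZeta

open HurwitzZeta in
/-- The theta-type series `H(y) = ∑_{k≥1} exp(−π²(2k−1)²y/2)` satisfies
`2 H(y) √(2πy) → 1` as `y ↓ 0`. -/
theorem stmt_8
    (H : ℝ → ℝ)
    (hH : ∀ y, H y = ∑' k : ℕ, Real.exp (-(π ^ 2 * (2 * (k : ℝ) + 1) ^ 2 * y) / 2)) :
    Tendsto (fun y => 2 * H y * Real.sqrt (2 * π * y))
      (nhdsWithin 0 (Set.Ioi 0)) (nhds 1) := by
  have hkernel : ∀ y ∈ Set.Ioi (0 : ℝ),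
      cosKernel ((1 / 2 : ℝ) : UnitAddCircle) (1 / (2 * π * y)) = 2 * H y * √(2 * π * y) := by
    intro y (hy : 0 < y)
    have ht : 0 < 2 * π * y := by positivity
    rw [← evenKernel_mul_sqrt _ ht, ← (hasSum_nat_evenKernel_half ht).tsum_eq, tsum_mul_left, hH]
    congr 3 with k
    ring_nf
  have hinv : Tendsto (fun y : ℝ => 1 / (2 * π * y)) (𝓝[>] 0) atTop :=
    (tendsto_inv_nhdsGT_zero.const_mul_atTop (by positivity : 0 < (2 * π)⁻¹)).congr
      fun y => by ring
  exact ((tendsto_cosKernel_atTop _).comp hinv).congr' (eventually_nhdsWithin_of_forall hkernel)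
end

section
/- All derivatives of the Kummer-type function K(t) = 1 − Σ_{ℓ≥1} t^ℓ/((2ℓ−1)·ℓ!) are strictly negative on ℝ, and the ℓ-th derivative at 0 equals −1/(2ℓ−1) for ℓ ≥ 1. -/
open Real MeasureTheory Metric
open scoped ENNReal NNReal

noncomputable def Fk (ℓ : ℕ) (t : ℝ) : ℝ :=
  ∫ s in (0:ℝ)..1, s ^ (2*ℓ) * Real.exp (t * s^2)

noncomputable def Gf (t : ℝ) : ℝ :=
  ∫ s in (0:ℝ)..1, (Real.exp (t * s^2) - 1) / s^2

lemma Fk_cont (ℓ : ℕ) (t : ℝ) :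
    Continuous (fun s : ℝ => s ^ (2*ℓ) * Real.exp (t * s^2)) := by
  fun_prop

lemma Fk_intInt (ℓ : ℕ) (t : ℝ) :
    IntervalIntegrable (fun s : ℝ => s ^ (2*ℓ) * Real.exp (t * s^2)) volume 0 1 :=
  (Fk_cont ℓ t).intervalIntegrable 0 1

lemma Fk_pos (ℓ : ℕ) (t : ℝ) : 0 < Fk ℓ t :=
  intervalIntegral.intervalIntegral_pos_of_pos_on (Fk_intInt ℓ t)
    (fun x hx => mul_pos (pow_pos hx.1 _) (Real.exp_pos _)) one_pos

lemma Fk_zero (ℓ : ℕ) : Fk ℓ 0 = 1 / (2*(ℓ:ℝ) + 1) := by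
  have : Fk ℓ 0 = ∫ s in (0:ℝ)..1, s ^ (2*ℓ) := by
    unfold Fk; simp
  rw [this, integral_pow]
  push_cast
  norm_num

lemma abs_exp_sub_one_le' (y : ℝ) : |Real.exp y - 1| ≤ |y| * Real.exp |y| := by
  rcases le_or_gt 0 y with h | h
  · rw [abs_of_nonneg h, abs_of_nonneg (by nlinarith [Real.add_one_le_exp y] : (0:ℝ) ≤ Real.exp y - 1)]
    have h1 : Real.exp (-y) * Real.exp y = 1 := by rw [← Real.exp_add]; simp
    nlinarith [Real.add_one_le_exp (-y), h1, Real.exp_pos y]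
  · rw [abs_of_neg h, abs_of_nonpos (by nlinarith [Real.exp_lt_one_iff.mpr h] : Real.exp y - 1 ≤ 0)]
    nlinarith [Real.add_one_le_exp y, Real.one_le_exp (neg_nonneg.mpr h.le), Real.exp_pos y]

lemma hasDerivAt_Fk (ℓ : ℕ) (t : ℝ) : HasDerivAt (Fk ℓ) (Fk (ℓ+1) t) t := by
  have key := intervalIntegral.hasDerivAt_integral_of_dominated_loc_of_deriv_le
    (F := fun (x : ℝ) (s : ℝ) => s ^ (2*ℓ) * Real.exp (x * s^2))
    (F' := fun (x : ℝ) (s : ℝ) => s ^ (2*(ℓ+1)) * Real.exp (x * s^2))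
    (x₀ := t) (a := 0) (b := 1) (μ := volume)
    (bound := fun _ => Real.exp (|t| + 1)) (Metric.ball_mem_nhds t one_pos)
    (Filter.Eventually.of_forall fun x => ((Fk_cont ℓ x).aestronglyMeasurable))
    (Fk_intInt ℓ t)
    ((Fk_cont (ℓ+1) t).aestronglyMeasurable)
    ?_ (intervalIntegrable_const) ?_
  · exact key.2
  · refine Filter.Eventually.of_forall fun s hs x hx => ?_
    rw [Set.uIoc_of_le (by norm_num : (0:ℝ) ≤ 1)] at hs
    have hs1 : 0 < s := hs.1
    have hs2 : s ≤ 1 := hs.2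
    have h1 : |s ^ (2*(ℓ+1))| ≤ 1 := by
      rw [abs_pow]
      exact pow_le_one₀ (abs_nonneg s) (by rw [abs_of_pos hs1]; exact hs2)
    have hx' : |x - t| < 1 := by simpa [Real.dist_eq] using hx
    have hxle : x ≤ |t| + 1 := by
      linarith [abs_sub_abs_le_abs_sub x t, hx'.le, le_abs_self x]
    have h2 : x * s^2 ≤ |t| + 1 := by
      rcases le_or_gt x 0 with hx0 | hx0
      · have : x * s^2 ≤ 0 := mul_nonpos_of_nonpos_of_nonneg hx0 (sq_nonneg s)
        linarith [abs_nonneg t]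
      · have : x * s^2 ≤ x * 1 :=
          mul_le_mul_of_nonneg_left (pow_le_one₀ hs1.le hs2) hx0.le
        linarith
    rw [norm_mul, Real.norm_eq_abs, Real.norm_eq_abs, Real.abs_exp]
    calc |s ^ (2*(ℓ+1))| * Real.exp (x * s^2) ≤ 1 * Real.exp (|t| + 1) := by
          exact mul_le_mul h1 (Real.exp_le_exp.2 h2) (Real.exp_pos _).le one_pos.le
      _ = Real.exp (|t| + 1) := one_mul _
  · refine Filter.Eventually.of_forall fun s hs x hx => ?_
    have hd : HasDerivAt (fun x : ℝ => Real.exp (x * s^2)) (Real.exp (x * s^2) * (1 * s^2)) x :=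
      ((hasDerivAt_id x).mul_const (s^2)).exp
    have := hd.const_mul (s ^ (2*ℓ))
    exact this.congr_deriv (by ring)

lemma Gf_meas (x : ℝ) :
    AEStronglyMeasurable (fun s : ℝ => (Real.exp (x * s^2) - 1) / s^2)
      (volume.restrict (Set.uIoc (0:ℝ) 1)) := by
  apply Measurable.aestronglyMeasurable
  exact ((Real.measurable_exp.comp ((measurable_id.pow_const 2).const_mul x)).sub
    measurable_const).div (measurable_id.pow_const 2)

lemma Gf_intInt (t : ℝ) :
    IntervalIntegrable (fun s : ℝ => (Real.exp (t * s^2) - 1) / s^2) volume 0 1 := by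
  rw [intervalIntegrable_iff, Set.uIoc_of_le (by norm_num : (0:ℝ) ≤ 1)]
  have hmeas : AEStronglyMeasurable (fun s : ℝ => (Real.exp (t * s^2) - 1) / s^2)
      (volume.restrict (Set.Ioc (0:ℝ) 1)) := by
    have h := Gf_meas t
    rwa [Set.uIoc_of_le (by norm_num : (0:ℝ) ≤ 1)] at h
  apply Integrable.mono' (g := fun _ => |t| * Real.exp |t|)
    (integrableOn_const (hs := measure_Ioc_lt_top.ne)) hmeas
  refine (ae_restrict_iff' measurableSet_Ioc).2 (Filter.Eventually.of_forall fun s hs => ?_)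
  have hs1 : 0 < s := hs.1
  have hs2 : s ≤ 1 := hs.2
  have hsq : (0:ℝ) < s^2 := by positivity
  rw [Real.norm_eq_abs, abs_div, abs_of_pos hsq, div_le_iff₀ hsq]
  calc |Real.exp (t * s^2) - 1| ≤ |t * s^2| * Real.exp |t * s^2| :=
        abs_exp_sub_one_le' _
    _ ≤ |t| * Real.exp |t| * s^2 := by
        rw [abs_mul, abs_of_pos hsq]
        have hle : |t| * s^2 ≤ |t| := by
          nlinarith [abs_nonneg t, pow_le_one₀ hs1.le hs2 (n := 2)]
        have h3 : Real.exp (|t| * s^2) ≤ Real.exp |t| := Real.exp_le_exp.2 hle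
        calc |t| * s^2 * Real.exp (|t| * s^2) ≤ |t| * s^2 * Real.exp |t| :=
              mul_le_mul_of_nonneg_left h3 (mul_nonneg (abs_nonneg t) hsq.le)
          _ = |t| * Real.exp |t| * s^2 := by ring

lemma hasDerivAt_Gf (t : ℝ) : HasDerivAt Gf (Fk 0 t) t := by
  have key := intervalIntegral.hasDerivAt_integral_of_dominated_loc_of_deriv_le
    (F := fun (x : ℝ) (s : ℝ) => (Real.exp (x * s^2) - 1) / s^2)
    (F' := fun (x : ℝ) (s : ℝ) => Real.exp (x * s^2))
    (x₀ := t) (a := 0) (b := 1) (μ := volume)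
    (bound := fun _ => Real.exp (|t| + 1)) (Metric.ball_mem_nhds t one_pos)
    (Filter.Eventually.of_forall fun x => Gf_meas x)
    (Gf_intInt t)
    (Continuous.aestronglyMeasurable (by fun_prop))
    ?_ (intervalIntegrable_const) ?_
  · have heq : Fk 0 t = ∫ s in (0:ℝ)..1, Real.exp (t * s^2) := by
      unfold Fk
      apply intervalIntegral.integral_congr
      intro s _
      simp
    rw [heq]
    exact key.2
  · refine Filter.Eventually.of_forall fun s hs x hx => ?_
    rw [Set.uIoc_of_le (by norm_num : (0:ℝ) ≤ 1)] at hs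
    have hx' : |x - t| < 1 := by simpa [Real.dist_eq] using hx
    have hxle : x ≤ |t| + 1 := by
      linarith [abs_sub_abs_le_abs_sub x t, hx'.le, le_abs_self x]
    have h2 : x * s^2 ≤ |t| + 1 := by
      rcases le_or_gt x 0 with hx0 | hx0
      · have : x * s^2 ≤ 0 := mul_nonpos_of_nonpos_of_nonneg hx0 (sq_nonneg s)
        linarith [abs_nonneg t]
      · have : x * s^2 ≤ x * 1 :=
          mul_le_mul_of_nonneg_left (pow_le_one₀ hs.1.le hs.2) hx0.le
        linarith
    rw [Real.norm_eq_abs, Real.abs_exp]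
    exact Real.exp_le_exp.2 h2
  · refine Filter.Eventually.of_forall fun s hs x hx => ?_
    rw [Set.uIoc_of_le (by norm_num : (0:ℝ) ≤ 1)] at hs
    have hs0 : s ≠ 0 := ne_of_gt hs.1
    have hd : HasDerivAt (fun x : ℝ => (Real.exp (x * s^2) - 1) / s^2)
        ((Real.exp (x * s^2) * (1 * s^2)) / s^2) x :=
      ((((hasDerivAt_id x).mul_const (s^2)).exp).sub_const 1).div_const (s^2)
    exact hd.congr_deriv (by field_simp)

lemma real_exp_tsum (x : ℝ) : Real.exp x = ∑' n : ℕ, x ^ n / (n.factorial : ℝ) := by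
  rw [Real.exp_eq_exp_ℝ, NormedSpace.exp_eq_tsum_div]

lemma summable_shift (x : ℝ) :
    Summable (fun n : ℕ => x ^ (n+1) / ((n+1).factorial : ℝ)) :=
  (Real.summable_pow_div_factorial x).comp_injective (add_left_injective 1)

lemma exp_sub_one_tsum (x : ℝ) :
    Real.exp x - 1 = ∑' n : ℕ, x ^ (n+1) / ((n+1).factorial : ℝ) := by
  have h := real_exp_tsum x
  rw [Summable.tsum_eq_zero_add (Real.summable_pow_div_factorial x)] at h
  simp only [pow_zero, Nat.factorial_zero, Nat.cast_one, div_one] at h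
  linarith

lemma series_eq (t : ℝ) :
    ∑' ℓ : ℕ, t ^ (ℓ + 1) / ((2 * (ℓ : ℝ) + 1) * (Nat.factorial (ℓ + 1))) = Gf t := by
  have h1 : Gf t = ∫ s in Set.Ioc (0:ℝ) 1, (Real.exp (t * s^2) - 1) / s^2 := by
    rw [Gf, intervalIntegral.integral_of_le zero_le_one]
  have h2 : ∀ s ∈ Set.Ioc (0:ℝ) 1,
      (Real.exp (t * s^2) - 1) / s^2
        = ∑' ℓ : ℕ, t^(ℓ+1) * s^(2*ℓ) / (Nat.factorial (ℓ+1) : ℝ) := by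
    intro s hs
    have hs0 : (s:ℝ) ≠ 0 := ne_of_gt hs.1
    rw [exp_sub_one_tsum (t * s^2), ← tsum_div_const]
    apply tsum_congr
    intro ℓ
    have hfac : ((ℓ+1).factorial : ℝ) ≠ 0 := Nat.cast_ne_zero.2 (Nat.factorial_ne_zero _)
    field_simp
    ring
  have h3 : (∫ s in Set.Ioc (0:ℝ) 1, ∑' ℓ : ℕ, t^(ℓ+1) * s^(2*ℓ) / (Nat.factorial (ℓ+1) : ℝ))
      = ∑' ℓ : ℕ, ∫ s in Set.Ioc (0:ℝ) 1, t^(ℓ+1) * s^(2*ℓ) / (Nat.factorial (ℓ+1) : ℝ) := by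
    apply MeasureTheory.integral_tsum
    · intro ℓ
      exact Continuous.aestronglyMeasurable (by fun_prop)
    · have hb : ∀ ℓ : ℕ,
          (∫⁻ s in Set.Ioc (0:ℝ) 1, ‖t^(ℓ+1) * s^(2*ℓ) / (Nat.factorial (ℓ+1) : ℝ)‖₊)
            ≤ ENNReal.ofReal (|t|^(ℓ+1) / (Nat.factorial (ℓ+1) : ℝ)) := by
        intro ℓ
        have hpt : ∀ s ∈ Set.Ioc (0:ℝ) 1,
            (‖t^(ℓ+1) * s^(2*ℓ) / (Nat.factorial (ℓ+1) : ℝ)‖₊ : ℝ≥0∞)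
              ≤ ENNReal.ofReal (|t|^(ℓ+1) / (Nat.factorial (ℓ+1) : ℝ)) := by
          intro s hs
          rw [← enorm_eq_nnnorm, Real.enorm_eq_ofReal_abs]
          apply ENNReal.ofReal_le_ofReal
          have habs : |s| ≤ 1 := abs_le.2 ⟨by linarith [hs.1], hs.2⟩
          have h1' : |s|^(2*ℓ) ≤ 1 := pow_le_one₀ (abs_nonneg s) habs
          rw [abs_div, abs_mul, abs_pow, abs_pow, Nat.abs_cast]
          have hnum : |t|^(ℓ+1) * |s|^(2*ℓ) ≤ |t|^(ℓ+1) := by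
            calc |t|^(ℓ+1) * |s|^(2*ℓ) ≤ |t|^(ℓ+1) * 1 :=
                  mul_le_mul_of_nonneg_left h1' (by positivity)
              _ = |t|^(ℓ+1) := mul_one _
          gcongr
        calc (∫⁻ s in Set.Ioc (0:ℝ) 1, ‖t^(ℓ+1) * s^(2*ℓ) / (Nat.factorial (ℓ+1) : ℝ)‖₊)
            ≤ ∫⁻ _ in Set.Ioc (0:ℝ) 1,
                ENNReal.ofReal (|t|^(ℓ+1) / (Nat.factorial (ℓ+1) : ℝ)) :=
              setLIntegral_mono' measurableSet_Ioc hpt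
          _ = ENNReal.ofReal (|t|^(ℓ+1) / (Nat.factorial (ℓ+1) : ℝ))
                * volume (Set.Ioc (0:ℝ) 1) := setLIntegral_const _ _
          _ ≤ ENNReal.ofReal (|t|^(ℓ+1) / (Nat.factorial (ℓ+1) : ℝ)) := by
              rw [Real.volume_Ioc]
              simp
      have hsle : (∑' ℓ : ℕ, ∫⁻ s in Set.Ioc (0:ℝ) 1,
              ‖t^(ℓ+1) * s^(2*ℓ) / (Nat.factorial (ℓ+1) : ℝ)‖₊)
          ≤ ENNReal.ofReal (∑' ℓ : ℕ, |t|^(ℓ+1) / (Nat.factorial (ℓ+1) : ℝ)) := by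
        refine le_trans (ENNReal.tsum_le_tsum hb) (le_of_eq ?_)
        exact (ENNReal.ofReal_tsum_of_nonneg (fun ℓ => by positivity) (summable_shift |t|)).symm
      exact ne_top_of_le_ne_top ENNReal.ofReal_ne_top hsle
  have h4 : ∀ ℓ : ℕ, (∫ s in Set.Ioc (0:ℝ) 1, t^(ℓ+1) * s^(2*ℓ) / (Nat.factorial (ℓ+1) : ℝ))
      = t ^ (ℓ + 1) / ((2 * (ℓ:ℝ) + 1) * (Nat.factorial (ℓ+1) : ℝ)) := by
    intro ℓ
    rw [← intervalIntegral.integral_of_le zero_le_one]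
    have hrw : ∀ s : ℝ, t^(ℓ+1) * s^(2*ℓ) / (Nat.factorial (ℓ+1) : ℝ)
        = (t^(ℓ+1) / (Nat.factorial (ℓ+1) : ℝ)) * s^(2*ℓ) := fun s => by ring
    simp_rw [hrw]
    rw [intervalIntegral.integral_const_mul, integral_pow]
    have h0 : (0:ℝ)^(2*ℓ+1) = 0 := zero_pow (by omega)
    rw [h0, one_pow]
    have hfac : ((ℓ+1).factorial : ℝ) ≠ 0 := Nat.cast_ne_zero.2 (Nat.factorial_ne_zero _)
    have h21' : (2*(ℓ:ℝ) + 1) ≠ 0 := by positivity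
    push_cast
    field_simp
    ring
  rw [h1, MeasureTheory.setIntegral_congr_fun measurableSet_Ioc h2, h3]
  exact tsum_congr fun ℓ => (h4 ℓ).symm

/-- coefficients of the power series of `K` -/
noncomputable def ck : ℕ → ℝ
  | 0 => 1
  | (n+1) => -(1/((2*(n:ℝ)+1) * ((n+1).factorial : ℝ)))

lemma ck_abs (n : ℕ) : |ck n| ≤ 1 / (n.factorial : ℝ) := by
  cases n with
  | zero => simp [ck]
  | succ m =>
    have h1 : (0:ℝ) < 2*(m:ℝ)+1 := by positivity
    have h2 : (0:ℝ) < ((m+1).factorial : ℝ) := Nat.cast_pos.2 (Nat.factorial_pos _)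
    show |(-(1/((2*(m:ℝ)+1) * ((m+1).factorial : ℝ))))| ≤ _
    rw [abs_neg, abs_of_pos (by positivity)]
    rw [div_le_div_iff₀ (by positivity) h2]
    nlinarith [h2, h1]

lemma summable_ck (r : ℝ≥0) :
    Summable fun n => ‖FormalMultilinearSeries.ofScalars ℝ ck n‖ * (r:ℝ)^n := by
  refine Summable.of_nonneg_of_le (fun n => ?_) (fun n => ?_)
    (Real.summable_pow_div_factorial r)
  · positivity
  rw [FormalMultilinearSeries.ofScalars_norm]
  calc ‖ck n‖ * (r:ℝ)^n ≤ (1/(n.factorial:ℝ)) * (r:ℝ)^n := by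
        apply mul_le_mul_of_nonneg_right _ (by positivity)
        rw [Real.norm_eq_abs]; exact ck_abs n
    _ = (r:ℝ)^n / (n.factorial:ℝ) := by ring

lemma summable_ck_mul (t : ℝ) : Summable (fun n : ℕ => ck n * t^n) := by
  apply Summable.of_norm_bounded (Real.summable_pow_div_factorial |t|)
  intro n
  rw [norm_mul, Real.norm_eq_abs, Real.norm_eq_abs, abs_pow]
  calc |ck n| * |t|^n ≤ (1/(n.factorial:ℝ)) * |t|^n :=
        mul_le_mul_of_nonneg_right (ck_abs n) (by positivity)
    _ = |t|^n / (n.factorial:ℝ) := by ring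

lemma K_contDiff (K : ℝ → ℝ)
    (hK : ∀ t, K t = 1 - ∑' ℓ : ℕ,
        t ^ (ℓ + 1) / ((2 * (ℓ : ℝ) + 1) * (Nat.factorial (ℓ + 1)))) :
    ContDiff ℝ (⊤ : ℕ∞) K := by
  have hKsum : K = (FormalMultilinearSeries.ofScalars ℝ ck).sum := by
    funext t
    have hsum : (FormalMultilinearSeries.ofScalars ℝ ck).sum t = ∑' n : ℕ, ck n * t^n := by
      refine tsum_congr fun n => ?_
      rw [FormalMultilinearSeries.ofScalars_apply_eq]
      simp [smul_eq_mul]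
    rw [hsum, Summable.tsum_eq_zero_add (summable_ck_mul t), hK t]
    have hc0 : ck 0 * t^0 = 1 := by simp [ck]
    have hcn : ∀ ℓ : ℕ, ck (ℓ+1) * t^(ℓ+1)
        = -(t ^ (ℓ + 1) / ((2 * (ℓ : ℝ) + 1) * (Nat.factorial (ℓ + 1)))) := by
      intro ℓ
      show (-(1/((2*(ℓ:ℝ)+1) * ((ℓ+1).factorial : ℝ)))) * t^(ℓ+1) = _
      ring
    rw [hc0]
    rw [tsum_congr hcn, tsum_neg]
    ring
  have hrad : (FormalMultilinearSeries.ofScalars ℝ ck).radius = ⊤ :=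
    FormalMultilinearSeries.radius_eq_top_of_summable_norm _ summable_ck
  have hps : HasFPowerSeriesOnBall K (FormalMultilinearSeries.ofScalars ℝ ck) 0 ⊤ := by
    have h := (FormalMultilinearSeries.ofScalars ℝ ck).hasFPowerSeriesOnBall
      (by rw [hrad]; exact ENNReal.zero_lt_top)
    rw [hrad] at h
    rw [hKsum]
    exact h
  have hA : AnalyticOnNhd ℝ K Set.univ := fun x _ =>
    hps.analyticAt_of_mem (EMetric.mem_ball.2 (edist_lt_top x 0))
  exact hA.contDiff

/-- All derivatives of `K(t) = 1 − ∑_{ℓ≥1} t^ℓ/((2ℓ−1)·ℓ!)` are strictly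
negative on ℝ, and the `ℓ`-th derivative at `0` equals `−1/(2ℓ−1)` for `ℓ ≥ 1`;
moreover `K` is infinitely differentiable. -/
theorem stmt_13
    (K : ℝ → ℝ)
    (hK : ∀ t, K t = 1 - ∑' ℓ : ℕ,
        t ^ (ℓ + 1) / ((2 * (ℓ : ℝ) + 1) * (Nat.factorial (ℓ + 1)))) :
    ContDiff ℝ (⊤ : ℕ∞) K ∧
    (∀ ℓ : ℕ, 1 ≤ ℓ → ∀ t : ℝ, iteratedDeriv ℓ K t < 0) ∧
    (∀ ℓ : ℕ, 1 ≤ ℓ → iteratedDeriv ℓ K 0 = -1 / (2 * (ℓ : ℝ) - 1)) := by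
  have hKfun : K = fun t => 1 - Gf t := funext fun t => by rw [hK t, series_eq t]
  have hdK : ∀ t, HasDerivAt K (-(Fk 0 t)) t := by
    intro t
    rw [hKfun]
    exact (hasDerivAt_Gf t).const_sub 1
  have hiter : ∀ n : ℕ, iteratedDeriv (n+1) K = fun t => -(Fk n t) := by
    intro n
    induction n with
    | zero =>
      funext t
      rw [iteratedDeriv_one]
      exact (hdK t).deriv
    | succ m ih =>
      rw [iteratedDeriv_succ, ih]
      funext t
      exact ((hasDerivAt_Fk m t).neg).deriv
  refine ⟨K_contDiff K hK, ?_, ?_⟩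
  · intro ℓ hℓ t
    obtain ⟨m, rfl⟩ : ∃ m, ℓ = m + 1 := ⟨ℓ - 1, by omega⟩
    rw [hiter m]
    exact neg_lt_zero.2 (Fk_pos m t)
  · intro ℓ hℓ
    obtain ⟨m, rfl⟩ : ∃ m, ℓ = m + 1 := ⟨ℓ - 1, by omega⟩
    have hrw : iteratedDeriv (m+1) K 0 = -(Fk m 0) := by rw [hiter m]
    rw [hrw, Fk_zero m]
    have h21 : 2 * ((m+1:ℕ):ℝ) - 1 = 2*(m:ℝ)+1 := by push_cast; ring
    rw [h21, neg_div]
end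

section
/- If τ has the positive 1/2-stable density f(t) = (2πt³)^{−1/2} e^{−1/(2t)} on (0,∞), then for a, u > 0, E[min(u, aτ)] = u + √(2au/π) e^{−a/(2u)} − 2(a+u)(1 − Φ(√(a/u))), where Φ is the standard normal CDF. -/
/-!
Substituting `t = x⁻²` turns the density of `τ` on `(0, ∞)` into twice the standard normal
density `φ` (i.e. `τ` has the law of `Z⁻²` for a standard normal `Z`), so that
`E[min(u, aτ)] = 2 ∫₀^∞ φ(x) min(u, a x⁻²) dx`. The minimum switches branches at `x = √(a/u)`;
below it the integral is a normal probability, above it the integral of `φ(x) x⁻²` follows from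
`(-x⁻¹ φ(x))' = x⁻² φ(x) + φ(x)`.
-/

open MeasureTheory ProbabilityTheory Real Set Filter Topology

theorem integral_withDensity_ofReal_indicator {X E : Type*} [MeasurableSpace X]
    [NormedAddCommGroup E] [NormedSpace ℝ E] {μ : Measure X} {s : Set X} (hs : MeasurableSet s)
    {f : X → ℝ} (hf : Measurable f) (hf_nonneg : ∀ x ∈ s, 0 ≤ f x) (g : X → E) :
    ∫ x, g x ∂μ.withDensity (fun x => ENNReal.ofReal (s.indicator f x))
      = ∫ x in s, f x • g x ∂μ := by
  rw [integral_withDensity_eq_integral_toReal_smul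
      (f := fun x => ENNReal.ofReal (s.indicator f x))
      (ENNReal.measurable_ofReal.comp (hf.indicator hs))
      (ae_of_all _ fun _ => ENNReal.ofReal_lt_top),
    ← integral_indicator hs]
  congr 1 with x
  rw [ENNReal.toReal_ofReal (indicator_nonneg hf_nonneg x)]
  by_cases hx : x ∈ s <;> simp [hx]

noncomputable def stdNormalPDF (x : ℝ) : ℝ := (√(2 * π))⁻¹ * exp (-x ^ 2 / 2)

theorem stdNormalPDF_eq_gaussianPDFReal : stdNormalPDF = gaussianPDFReal 0 1 := by
  ext x; simp [stdNormalPDF, gaussianPDFReal]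

theorem integrable_stdNormalPDF : Integrable stdNormalPDF :=
  stdNormalPDF_eq_gaussianPDFReal ▸ integrable_gaussianPDFReal 0 1

theorem integral_stdNormalPDF : ∫ x, stdNormalPDF x = 1 :=
  stdNormalPDF_eq_gaussianPDFReal ▸ integral_gaussianPDFReal_eq_one 0 one_ne_zero

theorem stdNormalPDF_nonneg (x : ℝ) : 0 ≤ stdNormalPDF x := by
  unfold stdNormalPDF; positivity

theorem stdNormalPDF_neg (x : ℝ) : stdNormalPDF (-x) = stdNormalPDF x := by
  simp [stdNormalPDF]

theorem hasDerivAt_stdNormalPDF (x : ℝ) : HasDerivAt stdNormalPDF (-x * stdNormalPDF x) x := by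
  have h : HasDerivAt (fun y : ℝ => -y ^ 2 / 2) (-x) x :=
    ((hasDerivAt_pow 2 x).fun_neg.div_const 2).congr_deriv (by ring)
  exact (h.exp.const_mul (√(2 * π))⁻¹).congr_deriv (by unfold stdNormalPDF; ring)

theorem tendsto_stdNormalPDF_atTop : Tendsto stdNormalPDF atTop (𝓝 0) := by
  have h : Tendsto (fun x : ℝ => -x ^ 2 / 2) atTop atBot :=
    (tendsto_neg_atBot_iff.mpr (tendsto_pow_atTop two_ne_zero)).atBot_div_const two_pos
  have := (tendsto_exp_atBot.comp h).const_mul (√(2 * π))⁻¹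
  rwa [mul_zero] at this

theorem setIntegral_Iic_add_setIntegral_Ioi_stdNormalPDF (s : ℝ) :
    (∫ x in Iic s, stdNormalPDF x) + ∫ x in Ioi s, stdNormalPDF x = 1 := by
  rw [intervalIntegral.integral_Iic_add_Ioi integrable_stdNormalPDF.integrableOn
    integrable_stdNormalPDF.integrableOn, integral_stdNormalPDF]

theorem setIntegral_Iic_zero_stdNormalPDF : ∫ x in Iic 0, stdNormalPDF x = 1 / 2 := by
  have h := integral_comp_neg_Iic 0 stdNormalPDF
  simp only [stdNormalPDF_neg, neg_zero] at h
  linarith [setIntegral_Iic_add_setIntegral_Ioi_stdNormalPDF 0]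

theorem setIntegral_Ioc_zero_stdNormalPDF {b : ℝ} (hb : 0 ≤ b) :
    ∫ x in Ioc 0 b, stdNormalPDF x = (∫ x in Iic b, stdNormalPDF x) - 1 / 2 := by
  rw [← intervalIntegral.integral_of_le hb, ← setIntegral_Iic_zero_stdNormalPDF,
    intervalIntegral.integral_Iic_sub_Iic integrable_stdNormalPDF.integrableOn
      integrable_stdNormalPDF.integrableOn]

theorem hasDerivAt_neg_inv_mul_stdNormalPDF {x : ℝ} (hx : x ≠ 0) :
    HasDerivAt (fun y => -(y⁻¹ * stdNormalPDF y))
      ((x ^ 2)⁻¹ * stdNormalPDF x + stdNormalPDF x) x := by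
  refine ((hasDerivAt_inv hx).fun_mul (hasDerivAt_stdNormalPDF x)).fun_neg.congr_deriv ?_
  field_simp
  ring

theorem tendsto_neg_inv_mul_stdNormalPDF_atTop :
    Tendsto (fun y => -(y⁻¹ * stdNormalPDF y)) atTop (𝓝 0) := by
  simpa using (tendsto_inv_atTop_zero.mul tendsto_stdNormalPDF_atTop).neg

theorem integrableOn_Ioi_inv_sq_mul_stdNormalPDF {b : ℝ} (hb : 0 < b) :
    IntegrableOn (fun x => (x ^ 2)⁻¹ * stdNormalPDF x) (Ioi b) := by
  have hderiv x (hx : x ∈ Ioi b) := hasDerivAt_neg_inv_mul_stdNormalPDF (hb.trans hx).ne'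
  have hsum := integrableOn_Ioi_deriv_of_nonneg
    (hasDerivAt_neg_inv_mul_stdNormalPDF hb.ne').continuousAt.continuousWithinAt hderiv
    (fun x _ => by positivity [stdNormalPDF_nonneg x]) tendsto_neg_inv_mul_stdNormalPDF_atTop
  exact (hsum.sub integrable_stdNormalPDF.integrableOn).congr_fun
    (fun x _ => add_sub_cancel_right _ _) measurableSet_Ioi

theorem setIntegral_Ioi_inv_sq_mul_stdNormalPDF {b : ℝ} (hb : 0 < b) :
    ∫ x in Ioi b, (x ^ 2)⁻¹ * stdNormalPDF x
      = b⁻¹ * stdNormalPDF b - ∫ x in Ioi b, stdNormalPDF x := by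
  have hderiv x (hx : x ∈ Ioi b) := hasDerivAt_neg_inv_mul_stdNormalPDF (hb.trans hx).ne'
  have hsum := integral_Ioi_of_hasDerivAt_of_nonneg
    (hasDerivAt_neg_inv_mul_stdNormalPDF hb.ne').continuousAt.continuousWithinAt hderiv
    (fun x _ => by positivity [stdNormalPDF_nonneg x]) tendsto_neg_inv_mul_stdNormalPDF_atTop
  rw [integral_add (integrableOn_Ioi_inv_sq_mul_stdNormalPDF hb)
    integrable_stdNormalPDF.integrableOn] at hsum
  linarith

noncomputable def levyPDF (t : ℝ) : ℝ :=
  (2 * π * t ^ 3) ^ (-(1 : ℝ) / 2) * exp (-1 / (2 * t))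

theorem measurable_levyPDF : Measurable levyPDF := by
  unfold levyPDF; fun_prop

theorem levyPDF_nonneg {t : ℝ} (ht : 0 ≤ t) : 0 ≤ levyPDF t := by
  unfold levyPDF; positivity

theorem levyPDF_inv_sq {x : ℝ} (hx : 0 < x) : levyPDF (x ^ 2)⁻¹ = x ^ 3 * stdNormalPDF x := by
  have h3 : (2 * π * ((x ^ 2)⁻¹) ^ 3) ^ (-(1 : ℝ) / 2) = x ^ 3 * (√(2 * π))⁻¹ := by
    rw [show 2 * π * ((x ^ 2)⁻¹) ^ 3 = 2 * π * ((x ^ 3) ^ 2)⁻¹ by ring, neg_div,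
      rpow_neg (by positivity), ← sqrt_eq_rpow, sqrt_mul (by positivity), sqrt_inv,
      sqrt_sq (by positivity), mul_inv, inv_inv, mul_comm]
  rw [levyPDF, stdNormalPDF, h3, show -1 / (2 * (x ^ 2)⁻¹) = -x ^ 2 / 2 by field_simp, mul_assoc]

theorem setIntegral_Ioi_levyPDF_smul {E : Type*} [NormedAddCommGroup E] [NormedSpace ℝ E]
    (g : ℝ → E) :
    ∫ t in Ioi 0, levyPDF t • g t = ∫ x in Ioi 0, (2 * stdNormalPDF x) • g (x ^ 2)⁻¹ := by
  rw [← integral_comp_rpow_Ioi _ (show (-2 : ℝ) ≠ 0 by norm_num)]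
  refine setIntegral_congr_fun measurableSet_Ioi fun x (hx : 0 < x) => ?_
  have hinv : x ^ (-2 : ℝ) = (x ^ 2)⁻¹ := by rw [rpow_neg hx.le]; norm_cast
  have hinv_cube : x ^ (-2 - 1 : ℝ) = (x ^ 3)⁻¹ := by
    rw [show (-2 - 1 : ℝ) = -3 by norm_num, rpow_neg hx.le]; norm_cast
  rw [hinv, hinv_cube, levyPDF_inv_sq hx, smul_smul]
  congr 1
  field_simp
  norm_num

theorem min_mul_inv_sq_of_le_sqrt {a u x : ℝ} (hu : 0 < u) (hx : 0 < x) (hxb : x ≤ √(a / u)) :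
    min u (a * (x ^ 2)⁻¹) = u := by
  rw [le_sqrt' hx, le_div_iff₀ hu] at hxb
  apply min_eq_left
  rw [← div_eq_mul_inv, le_div_iff₀ (by positivity)]
  linarith

theorem min_mul_inv_sq_of_sqrt_lt {a u x : ℝ} (hu : 0 < u) (hxb : √(a / u) < x) :
    min u (a * (x ^ 2)⁻¹) = a * (x ^ 2)⁻¹ := by
  have hx : 0 < x := (sqrt_nonneg _).trans_lt hxb
  rw [sqrt_lt' hx, div_lt_iff₀ hu] at hxb
  apply min_eq_right
  rw [← div_eq_mul_inv, div_le_iff₀ (by positivity)]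
  linarith

theorem setIntegral_Ioi_stdNormalPDF_mul_min {a u : ℝ} (ha : 0 < a) (hu : 0 < u) :
    ∫ x in Ioi 0, 2 * stdNormalPDF x * min u (a * (x ^ 2)⁻¹)
      = 2 * u * ((∫ x in Iic √(a / u), stdNormalPDF x) - 1 / 2)
        + 2 * a * ((√(a / u))⁻¹ * stdNormalPDF √(a / u)
          - ∫ x in Ioi √(a / u), stdNormalPDF x) := by
  set b := √(a / u)
  have hb : 0 < b := sqrt_pos.mpr (by positivity)
  have hleft : EqOn (fun x => 2 * stdNormalPDF x * min u (a * (x ^ 2)⁻¹))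
      (fun x => 2 * u * stdNormalPDF x) (Ioc 0 b) := fun x hx => by
    simp only [min_mul_inv_sq_of_le_sqrt hu hx.1 hx.2]; ring
  have hright : EqOn (fun x => 2 * stdNormalPDF x * min u (a * (x ^ 2)⁻¹))
      (fun x => 2 * a * ((x ^ 2)⁻¹ * stdNormalPDF x)) (Ioi b) := fun x hx => by
    simp only [min_mul_inv_sq_of_sqrt_lt hu hx]; ring
  rw [← Ioc_union_Ioi_eq_Ioi hb.le, setIntegral_union (Ioc_disjoint_Ioi le_rfl) measurableSet_Ioi
      ((integrable_stdNormalPDF.const_mul (2 * u)).integrableOn.congr_fun hleft.symm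
        measurableSet_Ioc)
      (IntegrableOn.congr_fun ((integrableOn_Ioi_inv_sq_mul_stdNormalPDF hb).const_mul (2 * a))
        hright.symm measurableSet_Ioi),
    setIntegral_congr_fun measurableSet_Ioc hleft, setIntegral_congr_fun measurableSet_Ioi hright,
    integral_const_mul, integral_const_mul, setIntegral_Ioc_zero_stdNormalPDF hb.le,
    setIntegral_Ioi_inv_sq_mul_stdNormalPDF hb]

theorem two_mul_inv_sqrt_div_mul_stdNormalPDF {a u : ℝ} (ha : 0 < a) (hu : 0 < u) :
    2 * a * ((√(a / u))⁻¹ * stdNormalPDF √(a / u))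
      = √(2 * a * u / π) * exp (-a / (2 * u)) := by
  have hsq : √(2 * a * u / π) * (√(a / u) * √(2 * π)) = 2 * a := by
    rw [← sqrt_mul (by positivity), ← sqrt_mul (by positivity),
      show 2 * a * u / π * (a / u * (2 * π)) = (2 * a) ^ 2 by field_simp, sqrt_sq (by positivity)]
  rw [stdNormalPDF, sq_sqrt (by positivity), show -(a / u) / 2 = -a / (2 * u) by ring]
  have : 0 < √(a / u) := sqrt_pos.mpr (by positivity)
  field_simp
  linear_combination -hsq

theorem stmt_17_general
    {Ω : Type*} [MeasurableSpace Ω] (P : Measure Ω)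
    (τ : Ω → ℝ) (hτmeas : Measurable τ)
    (hτdist : Measure.map τ P = volume.withDensity (fun t =>
        ENNReal.ofReal (Set.indicator (Set.Ioi (0:ℝ))
          (fun t => (2 * π * t ^ 3) ^ (-(1:ℝ)/2) * Real.exp (-1 / (2 * t))) t)))
    (Φ : ℝ → ℝ)
    (hΦ : ∀ s, Φ s = ∫ x in Set.Iic s, (Real.sqrt (2 * π))⁻¹ * Real.exp (-x ^ 2 / 2))
    (a u : ℝ) (ha : 0 < a) (hu : 0 < u) :
    ∫ ω, min u (a * τ ω) ∂P
      = u + Real.sqrt (2 * a * u / π) * Real.exp (-a / (2 * u))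
        - 2 * (a + u) * (1 - Φ (Real.sqrt (a / u))) := by
  have hΦ' : Φ √(a / u) = ∫ x in Iic √(a / u), stdNormalPDF x := hΦ _
  calc ∫ ω, min u (a * τ ω) ∂P
      = ∫ t, min u (a * t) ∂(Measure.map τ P) :=
        (integral_map hτmeas.aemeasurable
          (by fun_prop : Continuous fun t => min u (a * t)).aestronglyMeasurable).symm
    _ = ∫ t in Ioi 0, levyPDF t • min u (a * t) := by
        rw [hτdist]
        exact integral_withDensity_ofReal_indicator measurableSet_Ioi measurable_levyPDF
          (fun t ht => levyPDF_nonneg (le_of_lt ht)) _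
    _ = ∫ x in Ioi 0, 2 * stdNormalPDF x * min u (a * (x ^ 2)⁻¹) :=
        setIntegral_Ioi_levyPDF_smul _
    _ = _ := setIntegral_Ioi_stdNormalPDF_mul_min ha hu
    _ = _ := by
        linear_combination two_mul_inv_sqrt_div_mul_stdNormalPDF ha hu - 2 * (a + u) * hΦ'
          - 2 * a * setIntegral_Iic_add_setIntegral_Ioi_stdNormalPDF √(a / u)

/-- If `τ` has the positive 1/2-stable density `f(t) = (2πt³)^{−1/2} e^{−1/(2t)}`
on `(0,∞)`, then for `a, u > 0`,
`E[min(u, aτ)] = u + √(2au/π) e^{−a/(2u)} − 2(a+u)(1 − Φ(√(a/u)))`. -/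
theorem stmt_17
    {Ω : Type*} [MeasurableSpace Ω] (P : Measure Ω) [IsProbabilityMeasure P]
    (τ : Ω → ℝ) (hτmeas : Measurable τ)
    (hτdist : Measure.map τ P = volume.withDensity (fun t =>
        ENNReal.ofReal (Set.indicator (Set.Ioi (0:ℝ))
          (fun t => (2 * π * t ^ 3) ^ (-(1:ℝ)/2) * Real.exp (-1 / (2 * t))) t)))
    (Φ : ℝ → ℝ)
    (hΦ : ∀ s, Φ s = ∫ x in Set.Iic s, (Real.sqrt (2 * π))⁻¹ * Real.exp (-x ^ 2 / 2))
    (a u : ℝ) (ha : 0 < a) (hu : 0 < u) :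
    ∫ ω, min u (a * τ ω) ∂P
      = u + Real.sqrt (2 * a * u / π) * Real.exp (-a / (2 * u))
        - 2 * (a + u) * (1 - Φ (Real.sqrt (a / u))) :=
  stmt_17_general P τ hτmeas hτdist Φ hΦ a u ha hu
end
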